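/- arXiv:1506.00392 — 5 statements merged into one kernel-verified Lean document; each statement's English description precedes it below -/
import Mathlib

section
/- Let N ≥ 2, let S ⊆ PG(N,q), and suppose there are nonnegative integers x_i (for i ≥ 1) such that for every point P ∈ S and every i ≥ 1, the number of lines through P meeting S in exactly i points equals x_i (independent of P). Then for every point P ∈ S, the number of unordered pairs of distinct points of PG(N,q) \ S collinear with P equals Σ_{i≥1} x_i · C(q+1−i, 2). In particular, PG(N,q) \ S is a (1, Σ_i x_i·C(q+1−i,2))-OS set of size (q^{N+1}−1)/(q−1) − #S (provided it spans PG(N,q) and is not the whole space). -/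
open Module

/-- Points of `PG(N,q)`: 1-dimensional subspaces of `F^(N+1)`. -/
abbrev PGPoint (F : Type) [Field F] (N : ℕ) :=
  {W : Submodule F (Fin (N + 1) → F) // Module.finrank F W = 1}

/-- Lines of `PG(N,q)`: 2-dimensional subspaces of `F^(N+1)`. -/
abbrev PGLine (F : Type) [Field F] (N : ℕ) :=
  {W : Submodule F (Fin (N + 1) → F) // Module.finrank F W = 2}

/-- The number of points of `S` lying on the line `L`. -/
noncomputable def lineCount {F : Type} [Field F] {N : ℕ}
    (S : Set (PGPoint F N)) (L : PGLine F N) : ℕ :=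
  {P : PGPoint F N | P ∈ S ∧ P.1 ≤ L.1}.ncard

/-- The number of unordered pairs of distinct points of `S` collinear with `Q`
(the number of secants of `S` through `Q`, counted with multiplicity). -/
noncomputable def pairCount {F : Type} [Field F] {N : ℕ}
    (S : Set (PGPoint F N)) (Q : PGPoint F N) : ℕ :=
  {e : Set (PGPoint F N) |
    ∃ A ∈ S, ∃ B ∈ S, A ≠ B ∧ e = {A, B} ∧ Q.1 ≤ A.1 ⊔ B.1}.ncard

/-- `S` spans (generates) `PG(N,q)`. -/
def Spans {F : Type} [Field F] {N : ℕ} (S : Set (PGPoint F N)) : Prop :=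
  (⨆ P ∈ S, P.1) = ⊤

/-- `S` is a `(1,μ)`-saturating set. -/
def IsSaturating {F : Type} [Field F] {N : ℕ} (S : Set (PGPoint F N)) (μ : ℕ) : Prop :=
  Spans S ∧ S ≠ Set.univ ∧ ∀ Q : PGPoint F N, Q ∉ S → μ ≤ pairCount S Q

/-- `S` is an optimal `(1,μ)`-saturating set (`(1,μ)`-OS set). -/
def IsOS {F : Type} [Field F] {N : ℕ} (S : Set (PGPoint F N)) (μ : ℕ) : Prop :=
  Spans S ∧ S ≠ Set.univ ∧ ∀ Q : PGPoint F N, Q ∉ S → pairCount S Q = μ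

/-- `S` is a minimal `(1,μ)`-saturating set: no proper subset is `(1,μ)`-saturating. -/
def IsMinimalSaturating {F : Type} [Field F] {N : ℕ} (S : Set (PGPoint F N)) (μ : ℕ) : Prop :=
  IsSaturating S μ ∧ ∀ T : Set (PGPoint F N), T ⊂ S → ¬ IsSaturating T μ

/-!
Two distinct points of `PG(N,q)` span exactly one line, so the pairs of points of a set `T`
collinear with `Q` can be counted line by line through `Q`:
`pairCount T Q = ∑_{L ∋ Q} C(#(T ∩ L), 2)`. Taking `T = Sᶜ` and `P ∈ S`, an `i`-secant of `S`
through `P` carries `q + 1 - i` points of `Sᶜ`, and grouping the lines through `P` by `i` gives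
`∑ᵢ xᵢ C(q + 1 - i, 2)`, independently of `P`. The size of `Sᶜ` comes from counting the points
of `PG(N,q)` as the projectivization of `F^(N+1)`.
-/

open scoped LinearAlgebra.Projectivization Function

section RankOneSubmodules

variable {F V : Type*} [Field F] [AddCommGroup V] [Module F V]

lemma ncard_setOf_rankOne_le (W : Submodule F V) :
    {P : {H : Submodule F V // finrank F H = 1} | P.1 ≤ W}.ncard = Nat.card (ℙ F W) := by
  let f : ℙ F W → {H : Submodule F V // finrank F H = 1} :=
    fun v => ⟨v.submodule.map W.subtype, by
      rw [Submodule.finrank_map_subtype_eq, v.finrank_submodule]⟩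
  have hf : Function.Injective f := fun v w h =>
    Projectivization.submodule_injective <|
      Submodule.map_injective_of_injective W.injective_subtype (congrArg Subtype.val h :)
  have hrange : Set.range f = {P | P.1 ≤ W} := by
    ext P
    refine ⟨by rintro ⟨v, rfl⟩; exact Submodule.map_subtype_le W _, fun hP => ?_⟩
    have hmap : (P.1.comap W.subtype).map W.subtype = P.1 := by
      rw [Submodule.map_comap_subtype, inf_of_le_right hP]
    refine ⟨Projectivization.mk'' (P.1.comap W.subtype) ?_, Subtype.ext ?_⟩
    · rw [← Submodule.finrank_map_subtype_eq, hmap, P.2]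
    · simp only [f, Projectivization.submodule_mk'', hmap]
  rw [← hrange, Set.ncard_range_of_injective hf]

lemma ncard_setOf_rankOne_le_of_finrank_eq_two [Finite F] {W : Submodule F V}
    (hW : finrank F W = 2) :
    {P : {H : Submodule F V // finrank F H = 1} | P.1 ≤ W}.ncard = Nat.card F + 1 := by
  rw [ncard_setOf_rankOne_le, Projectivization.card_of_finrank_two F W hW]

lemma card_rankOne_submodules [Finite F] :
    Nat.card {H : Submodule F V // finrank F H = 1} = (Nat.card V - 1) / (Nat.card F - 1) := by
  rw [← Nat.card_congr (Projectivization.equivSubmodule F V), Projectivization.card'']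

lemma finrank_sup_eq_two {A B : Submodule F V} (hA : finrank F A = 1) (hB : finrank F B = 1)
    (hAB : A ≠ B) : finrank F ↥(A ⊔ B) = 2 := by
  have : FiniteDimensional F A := Module.finite_of_finrank_eq_succ hA
  have : FiniteDimensional F B := Module.finite_of_finrank_eq_succ hB
  have hsum := Submodule.finrank_sup_add_finrank_inf_eq A B
  have hle : finrank F A ≤ finrank F ↥(A ⊔ B) := Submodule.finrank_mono le_sup_left
  by_contra hne
  have hsup : finrank F ↥(A ⊔ B) = 1 := by omega
  have hA' : A = A ⊔ B := Submodule.eq_of_le_of_finrank_eq le_sup_left (by rw [hA, hsup])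
  have hB' : B = A ⊔ B := Submodule.eq_of_le_of_finrank_eq le_sup_right (by rw [hB, hsup])
  exact hAB (hA'.trans hB'.symm)

end RankOneSubmodules

lemma finsum_mem_comp_eq_sum_ncard_smul {α β M : Type*} [AddCommMonoid M] {s : Set α}
    (hs : s.Finite) {c : α → β} {I : Finset β} (hc : ∀ a ∈ s, c a ∈ I) (g : β → M) :
    ∑ᶠ a ∈ s, g (c a) = ∑ i ∈ I, {a ∈ s | c a = i}.ncard • g i := by
  classical
  rw [finsum_mem_eq_finite_toFinset_sum _ hs,
    ← Finset.sum_fiberwise_of_maps_to' (g := c) (t := I) (by simpa using hc)]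
  refine Finset.sum_congr rfl fun i _ => ?_
  rw [Finset.sum_const, Set.ncard_eq_toFinset_card _ (hs.subset (Set.sep_subset _ _))]
  congr 2
  ext a
  simp

section ProjectiveSpace

variable {F : Type} [Field F] {N : ℕ}

lemma PGPoint.sup_eq_of_le {L : PGLine F N} {A B : PGPoint F N} (hA : A.1 ≤ L.1)
    (hB : B.1 ≤ L.1) (hAB : A ≠ B) : A.1 ⊔ B.1 = L.1 :=
  Submodule.eq_of_le_of_finrank_eq (sup_le hA hB) <| by
    rw [finrank_sup_eq_two A.2 B.2 (Subtype.coe_ne_coe.2 hAB), L.2]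

def pairsOnLine (T : Set (PGPoint F N)) (L : PGLine F N) : Set (Set (PGPoint F N)) :=
  {e | e ⊆ {A | A ∈ T ∧ A.1 ≤ L.1} ∧ e.ncard = 2}

lemma ncard_pairsOnLine [Finite F] (T : Set (PGPoint F N)) (L : PGLine F N) :
    (pairsOnLine T L).ncard = (lineCount T L).choose 2 :=
  Set.ncard_powerset_ncard (Set.toFinite _) 2

lemma pairwise_disjoint_pairsOnLine (T : Set (PGPoint F N)) :
    Pairwise (Disjoint on pairsOnLine T) := by
  intro L L' hLL'
  refine Set.disjoint_left.2 fun e ⟨he, he2⟩ ⟨he', _⟩ => ?_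
  obtain ⟨A, B, hAB, rfl⟩ := Set.ncard_eq_two.1 he2
  have hL := PGPoint.sup_eq_of_le (he (by simp)).2 (he (by simp)).2 hAB
  have hL' := PGPoint.sup_eq_of_le (he' (by simp)).2 (he' (by simp)).2 hAB
  exact hLL' (Subtype.ext (hL.symm.trans hL'))

lemma setOf_pairs_eq_biUnion_pairsOnLine (T : Set (PGPoint F N)) (Q : PGPoint F N) :
    {e : Set (PGPoint F N) | ∃ A ∈ T, ∃ B ∈ T, A ≠ B ∧ e = {A, B} ∧ Q.1 ≤ A.1 ⊔ B.1} =
      ⋃ L ∈ {L : PGLine F N | Q.1 ≤ L.1}, pairsOnLine T L := by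
  ext e
  simp only [Set.mem_iUnion, exists_prop]
  constructor
  · rintro ⟨A, hA, B, hB, hAB, rfl, hQ⟩
    refine ⟨⟨A.1 ⊔ B.1, finrank_sup_eq_two A.2 B.2 (Subtype.coe_ne_coe.2 hAB)⟩, hQ, ?_,
      Set.ncard_pair hAB⟩
    rintro C (rfl | rfl)
    exacts [⟨hA, le_sup_left⟩, ⟨hB, le_sup_right⟩]
  · rintro ⟨L, hQ, he, he2⟩
    obtain ⟨A, B, hAB, rfl⟩ := Set.ncard_eq_two.1 he2
    obtain ⟨hA, hAL⟩ := he (Set.mem_insert A {B})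
    obtain ⟨hB, hBL⟩ := he (Set.mem_insert_of_mem A rfl)
    exact ⟨A, hA, B, hB, hAB, rfl, PGPoint.sup_eq_of_le hAL hBL hAB ▸ hQ⟩

variable [Finite F]

lemma pairCount_eq_finsum (T : Set (PGPoint F N)) (Q : PGPoint F N) :
    pairCount T Q = ∑ᶠ L ∈ {L : PGLine F N | Q.1 ≤ L.1}, (lineCount T L).choose 2 := by
  rw [pairCount, setOf_pairs_eq_biUnion_pairsOnLine,
    Set.Finite.ncard_biUnion (Set.toFinite _) (fun _ _ => Set.toFinite _)
      ((pairwise_disjoint_pairsOnLine T).set_pairwise _)]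
  exact finsum_mem_congr rfl fun L _ => ncard_pairsOnLine T L

lemma lineCount_compl (S : Set (PGPoint F N)) (L : PGLine F N) :
    lineCount Sᶜ L = Nat.card F + 1 - lineCount S L := by
  have hsplit := Set.ncard_inter_add_ncard_sdiff_eq_ncard {P : PGPoint F N | P.1 ≤ L.1} S
  rw [ncard_setOf_rankOne_le_of_finrank_eq_two L.2, Set.inter_comm, Set.sdiff_eq,
    Set.inter_comm _ Sᶜ] at hsplit
  exact Nat.eq_sub_of_add_eq' hsplit

lemma lineCount_mem_Icc {S : Set (PGPoint F N)} {P : PGPoint F N} {L : PGLine F N}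
    (hP : P ∈ S) (hPL : P.1 ≤ L.1) : lineCount S L ∈ Finset.Icc 1 (Nat.card F + 1) := by
  refine Finset.mem_Icc.2 ⟨(Set.ncard_pos (Set.toFinite _)).2 ⟨P, hP, hPL⟩, ?_⟩
  rw [← ncard_setOf_rankOne_le_of_finrank_eq_two L.2]
  exact Set.ncard_le_ncard (fun A hA => hA.2) (Set.toFinite _)

lemma pairCount_compl_eq_sum {S : Set (PGPoint F N)} {P : PGPoint F N} (hP : P ∈ S) :
    pairCount Sᶜ P = ∑ i ∈ Finset.Icc 1 (Nat.card F + 1),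
      {L : PGLine F N | P.1 ≤ L.1 ∧ lineCount S L = i}.ncard * (Nat.card F + 1 - i).choose 2 := by
  simp only [pairCount_eq_finsum, lineCount_compl]
  exact finsum_mem_comp_eq_sum_ncard_smul (Set.toFinite _) (fun L => lineCount_mem_Icc hP)
    (fun i => (Nat.card F + 1 - i).choose 2)

end ProjectiveSpace

theorem stmt_6_general (F : Type) [Field F] [Fintype F] (q N : ℕ)
    (hq : Fintype.card F = q)
    (S : Set (PGPoint F N)) (x : ℕ → ℕ)
    (hx : ∀ P ∈ S, ∀ i : ℕ, 1 ≤ i →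
      {L : PGLine F N | P.1 ≤ L.1 ∧ lineCount S L = i}.ncard = x i) :
    (∀ P ∈ S, pairCount Sᶜ P =
      ∑ i ∈ Finset.Icc 1 (q + 1), x i * Nat.choose (q + 1 - i) 2) ∧
    Sᶜ.ncard = (q ^ (N + 1) - 1) / (q - 1) - S.ncard ∧
    (Spans Sᶜ ∧ Sᶜ ≠ Set.univ →
      IsOS Sᶜ (∑ i ∈ Finset.Icc 1 (q + 1), x i * Nat.choose (q + 1 - i) 2)) := by
  have hcard : Nat.card F = q := Nat.card_eq_fintype_card.trans hq
  have hpairs : ∀ P ∈ S, pairCount Sᶜ P =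
      ∑ i ∈ Finset.Icc 1 (q + 1), x i * Nat.choose (q + 1 - i) 2 := fun P hP => by
    rw [pairCount_compl_eq_sum hP, hcard]
    exact Finset.sum_congr rfl fun i hi => by rw [hx P hP i (Finset.mem_Icc.1 hi).1]
  refine ⟨hpairs, ?_, fun ⟨hspan, hne⟩ =>
    ⟨hspan, hne, fun Q hQ => hpairs Q (Set.notMem_compl_iff.1 hQ)⟩⟩
  rw [Set.ncard_compl, card_rankOne_submodules, Nat.card_fun, hcard]
  simp

/-- Let `N ≥ 2` and `S ⊆ PG(N,q)` be such that for every `P ∈ S`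
and every `i ≥ 1` the number of `i`-secants of `S` through `P` is a constant
`x i`. Then for every `P ∈ S` the number of unordered pairs of distinct points
of the complement of `S` collinear with `P` is `μ = Σ_{i≥1} x i · C(q+1−i, 2)`;
the complement has size `(q^(N+1)−1)/(q−1) − #S`, and (provided it spans and is
not the whole space) it is a `(1,μ)`-OS set. -/
theorem stmt_6 (F : Type) [Field F] [Fintype F] (q N : ℕ)
    (hq : Fintype.card F = q) (hN : 2 ≤ N)
    (S : Set (PGPoint F N)) (x : ℕ → ℕ)
    (hx : ∀ P ∈ S, ∀ i : ℕ, 1 ≤ i →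
      {L : PGLine F N | P.1 ≤ L.1 ∧ lineCount S L = i}.ncard = x i) :
    (∀ P ∈ S, pairCount Sᶜ P =
      ∑ i ∈ Finset.Icc 1 (q + 1), x i * Nat.choose (q + 1 - i) 2) ∧
    Sᶜ.ncard = (q ^ (N + 1) - 1) / (q - 1) - S.ncard ∧
    (Spans Sᶜ ∧ Sᶜ ≠ Set.univ →
      IsOS Sᶜ (∑ i ∈ Finset.Icc 1 (q + 1), x i * Nat.choose (q + 1 - i) 2)) :=
  stmt_6_general F q N hq S x hx
end

section
/- Let q > 2 be a prime power and let μ be an integer with 1 ≤ μ ≤ q+2. Then every set S of q+μ+1 points of PG(2,q) has the property that each point Q ∈ PG(2,q) \ S lies on at least μ unordered pairs of distinct points of S collinear with Q; consequently, if S ≠ PG(2,q) then S is a (1,μ)-saturating set, and every minimal (1,μ)-saturating set in PG(2,q) has size at most q+μ+1. -/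
open Module

/-!
The lines through a point `Q ∉ S` partition `S`, and there are only `q + 1` of them; a line
through `Q` meeting `S` in `k` points carries at least `k - 1` pairs of `S` collinear with `Q`.
Hence `Q` lies on at least `|S| - (q + 1)` such pairs, which is `μ` when `|S| = q + μ + 1`.
Since a line has only `q + 1` points, such a set spans the plane. Finally, a saturating set
with more than `q + μ + 1` points contains a subset of exactly that size, which is again
saturating, so it is not minimal.
-/

namespace Submodule

variable {F V : Type*} [Field F] [AddCommGroup V] [Module F V]

instance finite_of_finite [Finite V] : Finite (Submodule F V) :=
  Finite.of_injective _ SetLike.coe_injective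

theorem finrank_sup_eq_two_of_ne {P R : Submodule F V} (hP : finrank F P = 1)
    (hR : finrank F R = 1) (hne : P ≠ R) : finrank F ↥(P ⊔ R) = 2 := by
  have : FiniteDimensional F P := Module.finite_of_finrank_eq_succ hP
  have : FiniteDimensional F R := Module.finite_of_finrank_eq_succ hR
  have hPR : P ⊓ R = ⊥ := ((isAtom_iff_finrank_eq_one.mpr hP).disjoint_of_ne
    (isAtom_iff_finrank_eq_one.mpr hR) hne).eq_bot
  have := finrank_sup_add_finrank_inf_eq P R
  rw [hPR, finrank_bot] at this
  omega

theorem le_sup_of_sup_eq_sup {Q A B : Submodule F V} (hQ : finrank F Q = 1)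
    (hA : finrank F A = 1) (hB : finrank F B = 1) (hQA : Q ≠ A) (hAB : A ≠ B)
    (h : Q ⊔ A = Q ⊔ B) : Q ≤ A ⊔ B := by
  have hle : A ⊔ B ≤ Q ⊔ A := sup_le le_sup_right (h ▸ le_sup_right)
  have : FiniteDimensional F ↥(Q ⊔ A) := Module.finite_of_finrank_pos (by
    rw [finrank_sup_eq_two_of_ne hQ hA hQA]; norm_num)
  rw [eq_of_le_of_finrank_eq hle (by rw [finrank_sup_eq_two_of_ne hA hB hAB,
    finrank_sup_eq_two_of_ne hQ hA hQA])]
  exact le_sup_left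

theorem finrank_map_mkQ_add_finrank [FiniteDimensional F V] {Q L : Submodule F V} (h : Q ≤ L) :
    finrank F ↥(L.map Q.mkQ) + finrank F Q = finrank F L := by
  have hquot := (quotientQuotientEquivQuotient Q L h).finrank_eq
  rw [finrank_quotient, finrank_quotient, finrank_quotient] at hquot
  have := finrank_le (L.map Q.mkQ)
  rw [finrank_quotient] at this
  have := finrank_le L
  have := finrank_mono h
  omega

variable [Finite F]

theorem card_finrank_eq_one_le_of_finrank_le_two (h : finrank F V ≤ 2) :
    Nat.card {W : Submodule F V // finrank F W = 1} ≤ Nat.card F + 1 := by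
  rw [← Nat.card_congr (Projectivization.equivSubmodule F V),
    Projectivization.card_of_finrank F V rfl]
  interval_cases finrank F V <;> simp [Finset.sum_range_succ, add_comm]

variable [FiniteDimensional F V]

theorem ncard_finrank_eq_one_le_of_finrank_le_two (U : Submodule F V) (h : finrank F U ≤ 2) :
    {W : Submodule F V | finrank F W = 1 ∧ W ≤ U}.ncard ≤ Nat.card F + 1 := by
  have : Finite V := Module.finite_of_finite F
  have hsub : {W : Submodule F V | finrank F W = 1 ∧ W ≤ U} ⊆
      map U.subtype '' {H : Submodule F U | finrank F H = 1} := by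
    rintro W ⟨hW, hWU⟩
    refine ⟨W.comap U.subtype, ?_, by rw [map_comap_subtype, inf_eq_right.mpr hWU]⟩
    rw [Set.mem_ofPred_eq, ← finrank_map_subtype_eq, map_comap_subtype, inf_eq_right.mpr hWU,
      hW]
  calc _ ≤ (map U.subtype '' {H : Submodule F U | finrank F H = 1}).ncard :=
        Set.ncard_le_ncard hsub
    _ ≤ {H : Submodule F U | finrank F H = 1}.ncard := Set.ncard_image_le
    _ ≤ Nat.card F + 1 := by
      rw [← Nat.card_coe_set_eq]; exact card_finrank_eq_one_le_of_finrank_le_two h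

theorem ncard_finrank_eq_two_ge_le_of_finrank_le_three {Q : Submodule F V}
    (hQ : finrank F Q = 1) (hV : finrank F V ≤ 3) :
    {L : Submodule F V | finrank F L = 2 ∧ Q ≤ L}.ncard ≤ Nat.card F + 1 := by
  have : Finite V := Module.finite_of_finite F
  have hsub : {L : Submodule F V | finrank F L = 2 ∧ Q ≤ L} ⊆
      comap Q.mkQ '' {W : Submodule F (V ⧸ Q) | finrank F W = 1} := by
    rintro L ⟨hL, hQL⟩
    refine ⟨L.map Q.mkQ, ?_, by rw [comap_map_mkQ, sup_of_le_right hQL]⟩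
    have := finrank_map_mkQ_add_finrank hQL
    rw [Set.mem_ofPred_eq]
    omega
  have : Finite (V ⧸ Q) := Module.finite_of_finite F
  have hquot : finrank F (V ⧸ Q) ≤ 2 := by rw [finrank_quotient]; omega
  calc _ ≤ (comap Q.mkQ '' {W : Submodule F (V ⧸ Q) | finrank F W = 1}).ncard :=
        Set.ncard_le_ncard hsub
    _ ≤ {W : Submodule F (V ⧸ Q) | finrank F W = 1}.ncard := Set.ncard_image_le
    _ ≤ Nat.card F + 1 := by
      rw [← Nat.card_coe_set_eq]; exact card_finrank_eq_one_le_of_finrank_le_two hquot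

end Submodule

theorem Set.ncard_le_ncard_pairs_add_ncard_image {α β : Type*} (f : α → β) {s : Set α}
    (hs : s.Finite) :
    s.ncard ≤ {e : Set α | ∃ a ∈ s, ∃ b ∈ s, a ≠ b ∧ e = {a, b} ∧ f a = f b}.ncard +
      (f '' s).ncard := by
  rcases s.eq_empty_or_nonempty with rfl | ⟨x, -⟩
  · simp
  have : Nonempty α := ⟨x⟩
  -- each fibre of `f` over `f '' s` gets a representative `r b`; every other point `a`
  -- of `s` is paired with the representative of its own fibre
  set r := Function.invFunOn f s
  set R := r '' (f '' s)
  have hr_mem : ∀ a ∈ s, r (f a) ∈ s := fun a ha => Function.invFunOn_mem ⟨a, ha, rfl⟩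
  have hr_eq : ∀ a ∈ s, f (r (f a)) = f a := fun a ha => Function.invFunOn_eq ⟨a, ha, rfl⟩
  have hRs : R ⊆ s := by rintro _ ⟨_, ⟨a, ha, rfl⟩, rfl⟩; exact hr_mem a ha
  have hpairs : (s \ R).ncard ≤
      {e : Set α | ∃ a ∈ s, ∃ b ∈ s, a ≠ b ∧ e = {a, b} ∧ f a = f b}.ncard := by
    refine Set.ncard_le_ncard_of_injOn (fun a => {a, r (f a)}) ?_ ?_ ?_
    · rintro a ⟨ha, haR⟩
      refine ⟨a, ha, r (f a), hr_mem a ha, ?_, rfl, (hr_eq a ha).symm⟩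
      intro hrep
      exact haR ⟨f a, Set.mem_image_of_mem f ha, hrep.symm⟩
    · rintro a ⟨ha, haR⟩ a' ⟨ha', -⟩ h
      have : a ∈ ({a', r (f a')} : Set α) := by
        simp only at h
        exact h ▸ Set.mem_insert a _
      rcases this with rfl | hrep
      · rfl
      · exact absurd ⟨f a', Set.mem_image_of_mem f ha', hrep.symm⟩ haR
    · refine ((hs.prod hs).image fun p => ({p.1, p.2} : Set α)).subset ?_
      rintro _ ⟨a, ha, b, hb, -, rfl, -⟩
      exact ⟨(a, b), ⟨ha, hb⟩, rfl⟩
  calc s.ncard ≤ (s \ R).ncard + R.ncard :=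
        Set.ncard_le_ncard_sdiff_add_ncard s R (hs.subset hRs)
    _ ≤ _ := add_le_add hpairs (Set.ncard_image_le (hs.image f))

section PlaneCounting

variable {F : Type} [Field F] [Finite F]

theorem ncard_le_pairCount_add (S : Set (PGPoint F 2)) {Q : PGPoint F 2} (hQ : Q ∉ S) :
    S.ncard ≤ pairCount S Q + (Nat.card F + 1) := by
  have hQP : ∀ P ∈ S, Q.1 ≠ P.1 := fun P hP h => hQ (Subtype.ext h ▸ hP)
  have hpairs : {e : Set (PGPoint F 2) | ∃ A ∈ S, ∃ B ∈ S, A ≠ B ∧ e = {A, B} ∧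
      Q.1 ⊔ A.1 = Q.1 ⊔ B.1} ⊆ {e : Set (PGPoint F 2) |
      ∃ A ∈ S, ∃ B ∈ S, A ≠ B ∧ e = {A, B} ∧ Q.1 ≤ A.1 ⊔ B.1} := by
    rintro _ ⟨A, hA, B, hB, hAB, rfl, h⟩
    exact ⟨A, hA, B, hB, hAB, rfl, Submodule.le_sup_of_sup_eq_sup Q.2 A.2 B.2 (hQP A hA)
      (fun h' => hAB (Subtype.ext h')) h⟩
  have hlines : (fun P : PGPoint F 2 => Q.1 ⊔ P.1) '' S ⊆
      {L : Submodule F (Fin 3 → F) | finrank F L = 2 ∧ Q.1 ≤ L} := by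
    rintro _ ⟨P, hP, rfl⟩
    exact ⟨Submodule.finrank_sup_eq_two_of_ne Q.2 P.2 (hQP P hP), le_sup_left⟩
  calc S.ncard ≤ _ + _ := Set.ncard_le_ncard_pairs_add_ncard_image _ S.toFinite
    _ ≤ pairCount S Q + (Nat.card F + 1) := add_le_add (Set.ncard_le_ncard hpairs)
      ((Set.ncard_le_ncard hlines).trans
        (Submodule.ncard_finrank_eq_two_ge_le_of_finrank_le_three Q.2 (finrank_fin_fun F).le))

theorem spans_of_card_add_two_le {S : Set (PGPoint F 2)} (h : Nat.card F + 2 ≤ S.ncard) :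
    Spans S := by
  by_contra hS
  have hW : finrank F ↥(⨆ P ∈ S, P.1) ≤ 2 := by
    have := Submodule.finrank_lt hS
    rw [finrank_fin_fun] at this
    omega
  have hpoints : S.ncard ≤ Nat.card F + 1 :=
    calc S.ncard ≤ {W : Submodule F (Fin 3 → F) | finrank F W = 1 ∧ W ≤ ⨆ P ∈ S, P.1}.ncard :=
          Set.ncard_le_ncard_of_injOn Subtype.val
            (fun P hP => ⟨P.2, le_biSup (fun P : PGPoint F 2 => P.1) hP⟩)
            Subtype.val_injective.injOn
      _ ≤ Nat.card F + 1 := Submodule.ncard_finrank_eq_one_le_of_finrank_le_two _ hW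
  omega

end PlaneCounting

theorem stmt_10_general (F : Type) [Field F] [Fintype F] (q μ : ℕ)
    (hq : Fintype.card F = q) (hμ1 : 1 ≤ μ) :
    (∀ S : Set (PGPoint F 2), S.ncard = q + μ + 1 →
      (∀ Q : PGPoint F 2, Q ∉ S → μ ≤ pairCount S Q) ∧
      (S ≠ Set.univ → IsSaturating S μ)) ∧
    ∀ S : Set (PGPoint F 2), IsMinimalSaturating S μ → S.ncard ≤ q + μ + 1 := by
  rw [← Nat.card_eq_fintype_card] at hq
  subst hq
  have hsat : ∀ S : Set (PGPoint F 2), S.ncard = Nat.card F + μ + 1 →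
      ∀ Q, Q ∉ S → μ ≤ pairCount S Q := fun S hS Q hQ => by
    have := ncard_le_pairCount_add S hQ
    omega
  have hspans : ∀ S : Set (PGPoint F 2), S.ncard = Nat.card F + μ + 1 → Spans S :=
    fun S hS => spans_of_card_add_two_le (by omega)
  refine ⟨fun S hS => ⟨hsat S hS, fun hne => ⟨hspans S hS, hne, hsat S hS⟩⟩, ?_⟩
  rintro S ⟨⟨-, hSuniv, -⟩, hmin⟩
  by_contra! hbig
  obtain ⟨T, hTS, hT⟩ := Set.exists_subset_card_eq hbig.le
  have hTS' : T ⊂ S := hTS.ssubset_of_ne (by rintro rfl; omega)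
  exact hmin T hTS' ⟨hspans T hT, fun h => hSuniv (Set.univ_subset_iff.mp (h ▸ hTS)), hsat T hT⟩

/-- Let `q > 2` and `1 ≤ μ ≤ q+2`. Every set `S` of `q+μ+1`
points of `PG(2,q)` is such that each point `Q ∉ S` lies on at least `μ`
unordered pairs of distinct points of `S` collinear with `Q`; consequently if
`S ≠ PG(2,q)` then `S` is `(1,μ)`-saturating, and every minimal
`(1,μ)`-saturating set of `PG(2,q)` has size at most `q+μ+1`. -/
theorem stmt_10 (F : Type) [Field F] [Fintype F] (q μ : ℕ)
    (hq : Fintype.card F = q) (hq2 : 2 < q) (hμ1 : 1 ≤ μ) (hμ2 : μ ≤ q + 2) :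
    (∀ S : Set (PGPoint F 2), S.ncard = q + μ + 1 →
      (∀ Q : PGPoint F 2, Q ∉ S → μ ≤ pairCount S Q) ∧
      (S ≠ Set.univ → IsSaturating S μ)) ∧
    ∀ S : Set (PGPoint F 2), IsMinimalSaturating S μ → S.ncard ≤ q + μ + 1 :=
  stmt_10_general F q μ hq hμ1
end

section
/- Let q be a prime power and let μ be an integer with μ ≥ q+3. Then every set S of q+μ points of PG(2,q) has the property that each point Q ∈ PG(2,q) \ S lies on at least μ unordered pairs of distinct points of S collinear with Q; consequently, if S spans PG(2,q) and S ≠ PG(2,q), then S is a (1,μ)-saturating set, and every minimal (1,μ)-saturating set in PG(2,q) has size at most min{q+μ, q²+q}. -/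
open Module

/-! Through a point `Q ∉ S` of `PG(2,q)` pass at most `q + 1` lines, and a line through `Q`
carrying `n` points of `S` contributes `n.choose 2 ≥ 2n - 3` secants through `Q`. Summing over
these lines gives `pairCount S Q ≥ 2|S| - 3(q + 1)`, which is at least `μ` as soon as
`|S| ≥ q + μ` and `μ ≥ q + 3`. Hence a minimal `(1,μ)`-saturating set cannot have more than
`q + μ` points: deleting one point would leave a saturating set, as more than `q + 1` points
always span the plane. -/

open Finset

theorem Nat.two_mul_le_choose_two_add_three : ∀ n : ℕ, 2 * n ≤ n.choose 2 + 3
  | 0 => by decide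
  | 1 => by decide
  | n + 2 => by
    have := two_mul_le_choose_two_add_three (n + 1)
    have : (n + 2).choose 2 = (n + 1) + (n + 1).choose 2 := by
      rw [Nat.choose_succ_succ', Nat.choose_one_right]
    omega

namespace PGPoint

section Field

variable {F : Type} [Field F] {N : ℕ}

noncomputable def pointsLeEquivProjectivization (W : Submodule F (Fin (N + 1) → F)) :
    {P : PGPoint F N // P.1 ≤ W} ≃ Projectivization F W :=
  calc {P : PGPoint F N // P.1 ≤ W}
      ≃ {H : Submodule F W // finrank F H = 1} :=
        { toFun := fun P => ⟨P.1.1.comap W.subtype, by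
            rw [← Submodule.finrank_map_subtype_eq, Submodule.map_comap_subtype,
              inf_of_le_right P.2, P.1.2]⟩
          invFun := fun H => ⟨⟨H.1.map W.subtype, by rw [Submodule.finrank_map_subtype_eq, H.2]⟩,
            Submodule.map_subtype_le W _⟩
          left_inv := fun P => by
            ext1; ext1; exact (Submodule.map_comap_subtype W _).trans (inf_of_le_right P.2)
          right_inv := fun H => Subtype.ext
            (Submodule.comap_map_eq_of_injective W.injective_subtype _) }
    _ ≃ Projectivization F W := (Projectivization.equivSubmodule F W).symm

lemma finrank_sup_eq_two {A B : PGPoint F N} (h : A ≠ B) : finrank F ↥(A.1 ⊔ B.1) = 2 := by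
  have hAB : ¬ A.1 ≤ B.1 := fun hle =>
    h (Subtype.ext (Submodule.eq_of_le_of_finrank_eq hle (A.2.trans B.2.symm)))
  have hinf := Submodule.finrank_lt_finrank_of_lt (inf_lt_left.2 hAB)
  have := Submodule.finrank_sup_add_finrank_inf_eq A.1 B.1
  rw [A.2] at hinf
  omega

lemma sup_eq_of_finrank_eq_two {A B : PGPoint F N} {L : Submodule F (Fin (N + 1) → F)}
    (hL : finrank F L = 2) (hA : A.1 ≤ L) (hB : B.1 ≤ L) (h : A ≠ B) : A.1 ⊔ B.1 = L :=
  Submodule.eq_of_le_of_finrank_eq (sup_le hA hB) ((finrank_sup_eq_two h).trans hL.symm)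

end Field

section FiniteField

variable {F : Type} [Field F] [Fintype F] {N : ℕ}

lemma ncard_setOf_le (W : Submodule F (Fin (N + 1) → F)) :
    {P : PGPoint F N | P.1 ≤ W}.ncard = ∑ i ∈ range (finrank F W), Fintype.card F ^ i := by
  rw [← Nat.card_coe_set_eq, ← Nat.card_eq_fintype_card,
    ← Projectivization.card_of_finrank F W rfl]
  exact Nat.card_congr (pointsLeEquivProjectivization W)

lemma ncard_univ :
    (Set.univ : Set (PGPoint F N)).ncard = ∑ i ∈ range (N + 1), Fintype.card F ^ i := by
  simpa using ncard_setOf_le (F := F) (N := N) ⊤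

lemma spans_of_sum_lt_ncard {S : Set (PGPoint F N)}
    (hS : ∑ i ∈ range N, Fintype.card F ^ i < S.ncard) : Spans S := by
  by_contra hspan
  have hW : finrank F ↥(⨆ P ∈ S, P.1) ≤ N := by
    simpa [Nat.lt_succ_iff] using Submodule.finrank_lt hspan
  have hsub : S ⊆ {P | P.1 ≤ ⨆ P ∈ S, P.1} := fun P hP =>
    le_iSup₂ (f := fun (P : PGPoint F N) (_ : P ∈ S) => P.1) P hP
  have := (Set.ncard_le_ncard hsub).trans_eq (ncard_setOf_le _)
  exact this.not_gt (hS.trans_le' (sum_le_sum_of_subset (range_subset_range.2 hW)))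


lemma card_le_of_forall_line_through (Q : PGPoint F N)
    {𝓛 : Finset (Submodule F (Fin (N + 1) → F))} (h𝓛 : ∀ L ∈ 𝓛, finrank F L = 2 ∧ Q.1 ≤ L) :
    #𝓛 ≤ ∑ i ∈ range N, Fintype.card F ^ i := by
  classical
  let _ := Fintype.ofFinite (PGPoint F N)
  -- Distinct lines through `Q` meet only in `Q`, so their remaining `q` points are disjoint.
  let others : Submodule F (Fin (N + 1) → F) → Finset (PGPoint F N) :=
    fun L => {P | P.1 ≤ L}.toFinset.erase Q
  have hothers : ∀ L ∈ 𝓛, #(others L) = Fintype.card F := by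
    intro L hL
    rw [card_erase_of_mem (by simpa using (h𝓛 L hL).2), ← Set.ncard_eq_toFinset_card',
      ncard_setOf_le, (h𝓛 L hL).1]
    simp [sum_range_succ]
  have hdisj : (𝓛 : Set _).PairwiseDisjoint others := by
    intro L₁ h₁ L₂ h₂ hne
    refine disjoint_left.2 fun P hP₁ hP₂ => hne ?_
    simp only [others, mem_erase, Set.mem_toFinset, Set.mem_ofPred_eq] at hP₁ hP₂
    rw [← sup_eq_of_finrank_eq_two (h𝓛 L₁ h₁).1 (h𝓛 L₁ h₁).2 hP₁.2 (Ne.symm hP₁.1),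
      sup_eq_of_finrank_eq_two (h𝓛 L₂ h₂).1 (h𝓛 L₂ h₂).2 hP₂.2 (Ne.symm hP₂.1)]
  have hsub : 𝓛.biUnion others ⊆ univ.erase Q := fun P hP => by
    obtain ⟨L, -, hP⟩ := mem_biUnion.1 hP
    exact mem_erase.2 ⟨(mem_erase.1 hP).1, mem_univ P⟩
  have hcard := card_le_card hsub
  rw [card_biUnion hdisj, sum_congr rfl hothers, sum_const, smul_eq_mul,
    card_erase_of_mem (mem_univ Q), card_univ, ← Nat.card_eq_fintype_card (α := PGPoint F N),
    ← Set.ncard_univ, ncard_univ, sum_range_succ', pow_zero, Nat.add_sub_cancel] at hcard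
  simp only [pow_succ, ← sum_mul] at hcard
  exact Nat.le_of_mul_le_mul_right hcard Fintype.card_pos

lemma sum_choose_two_le_pairCount (S : Finset (PGPoint F N)) {Q : PGPoint F N} (hQ : Q ∉ S) :
    ∑ L ∈ S.image (fun A => Q.1 ⊔ A.1), (#{A ∈ S | Q.1 ⊔ A.1 = L}).choose 2
      ≤ pairCount ↑S Q := by
  classical
  set line := fun A : PGPoint F N => Q.1 ⊔ A.1
  let pairsOn := fun L => {A ∈ S | line A = L}.powersetCard 2
  have hline : ∀ {A}, A ∈ S → finrank F ↥(line A) = 2 := fun hA =>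
    finrank_sup_eq_two (ne_of_mem_of_not_mem hA hQ).symm
  calc ∑ L ∈ S.image line, (#{A ∈ S | line A = L}).choose 2
      = #((S.image line).sigma pairsOn) := by
        simp only [card_sigma, pairsOn, card_powersetCard]
    _ ≤ pairCount ↑S Q := by
      refine (Set.ncard_coe_finset _).symm.trans_le <|
        Set.ncard_le_ncard_of_injOn (fun x => (x.2 : Set (PGPoint F N))) ?_ ?_ (Set.toFinite _)
      · rintro ⟨L, t⟩ ht
        simp only [coe_sigma, Set.mem_sigma_iff, coe_image, Set.mem_image, mem_coe,
          mem_powersetCard, pairsOn] at ht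
        obtain ⟨-, hts, htc⟩ := ht
        obtain ⟨A, B, hAB, rfl⟩ := card_eq_two.1 htc
        have hA := mem_filter.1 (hts (mem_insert_self A {B}))
        have hB := mem_filter.1 (hts (mem_insert_of_mem (mem_singleton_self B)))
        refine ⟨A, hA.1, B, hB.1, hAB, coe_pair, ?_⟩
        have hBA : B.1 ≤ line A := hB.2.trans hA.2.symm ▸ le_sup_right
        rw [sup_eq_of_finrank_eq_two (hline hA.1) le_sup_right hBA hAB]
        exact le_sup_left
      · rintro ⟨L₁, t₁⟩ h₁ ⟨L₂, t₂⟩ h₂ heq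
        obtain rfl : t₁ = t₂ := coe_injective heq
        simp only [coe_sigma, Set.mem_sigma_iff, mem_coe, mem_powersetCard, pairsOn] at h₁ h₂
        obtain ⟨A, hA⟩ := card_pos.1 (h₁.2.2 ▸ two_pos)
        rw [← (mem_filter.1 (h₁.2.1 hA)).2, (mem_filter.1 (h₂.2.1 hA)).2]

theorem two_mul_ncard_le_pairCount_add {S : Set (PGPoint F N)} {Q : PGPoint F N} (hQ : Q ∉ S) :
    2 * S.ncard ≤ pairCount S Q + 3 * ∑ i ∈ range N, Fintype.card F ^ i := by
  classical
  obtain ⟨S, rfl⟩ := S.toFinite.exists_finset_coe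
  set line := fun A : PGPoint F N => Q.1 ⊔ A.1
  have hlines : #(S.image line) ≤ ∑ i ∈ range N, Fintype.card F ^ i := by
    refine card_le_of_forall_line_through Q fun L hL => ?_
    obtain ⟨A, hA, rfl⟩ := mem_image.1 hL
    exact ⟨finrank_sup_eq_two (ne_of_mem_of_not_mem hA hQ).symm, le_sup_left⟩
  calc 2 * (S : Set (PGPoint F N)).ncard
      = ∑ L ∈ S.image line, 2 * #{A ∈ S | line A = L} := by
        rw [Set.ncard_coe_finset, card_eq_sum_card_image line S, mul_sum]
    _ ≤ ∑ L ∈ S.image line, ((#{A ∈ S | line A = L}).choose 2 + 3) :=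
        sum_le_sum fun _ _ => Nat.two_mul_le_choose_two_add_three _
    _ = ∑ L ∈ S.image line, (#{A ∈ S | line A = L}).choose 2 + 3 * #(S.image line) := by
        rw [sum_add_distrib, sum_const, smul_eq_mul, mul_comm]
    _ ≤ _ := add_le_add (sum_choose_two_le_pairCount S hQ) (Nat.mul_le_mul_left 3 hlines)

end FiniteField

lemma le_pairCount_of_ncard_ge {F : Type} [Field F] [Fintype F] {S : Set (PGPoint F 2)}
    {Q : PGPoint F 2} {μ : ℕ} (hμ : Fintype.card F + 3 ≤ μ) (hS : Fintype.card F + μ ≤ S.ncard)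
    (hQ : Q ∉ S) : μ ≤ pairCount S Q := by
  have := two_mul_ncard_le_pairCount_add hQ
  simp only [sum_range_succ, sum_range_zero, pow_zero, pow_one] at this
  omega

end PGPoint

theorem IsMinimalSaturating.ncard_le {F : Type} [Field F] [Fintype F] {N : ℕ}
    {S : Set (PGPoint F N)} {μ k : ℕ}
    (hS : IsMinimalSaturating S μ) (hk : ∑ i ∈ range N, Fintype.card F ^ i < k)
    (hsat : ∀ T : Set (PGPoint F N), k ≤ T.ncard → ∀ Q ∉ T, μ ≤ pairCount T Q) :
    S.ncard ≤ k := by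
  obtain ⟨⟨-, hne, -⟩, hmin⟩ := hS
  by_contra! hSk
  obtain ⟨x, hx⟩ : S.Nonempty := Set.nonempty_of_ncard_ne_zero (by omega)
  have hcard : (S \ {x}).ncard = S.ncard - 1 := Set.ncard_sdiff_singleton_of_mem hx
  refine hmin (S \ {x}) (Set.sdiff_singleton_ssubset.2 hx)
    ⟨PGPoint.spans_of_sum_lt_ncard (by omega), fun h => hne ?_, hsat _ (by omega)⟩
  exact Set.eq_univ_of_univ_subset (h ▸ Set.sdiff_subset)

/-- Let `μ ≥ q+3`. Every set `S` of `q+μ` points of `PG(2,q)`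
is such that each point `Q ∉ S` lies on at least `μ` unordered pairs of distinct
points of `S` collinear with `Q`; consequently if `S` spans `PG(2,q)` and
`S ≠ PG(2,q)` then `S` is `(1,μ)`-saturating, and every minimal
`(1,μ)`-saturating set of `PG(2,q)` has size at most `min(q+μ, q²+q)`. -/
theorem stmt_11 (F : Type) [Field F] [Fintype F] (q μ : ℕ)
    (hq : Fintype.card F = q) (hμ : q + 3 ≤ μ) :
    (∀ S : Set (PGPoint F 2), S.ncard = q + μ →
      (∀ Q : PGPoint F 2, Q ∉ S → μ ≤ pairCount S Q) ∧
      (Spans S → S ≠ Set.univ → IsSaturating S μ)) ∧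
    ∀ S : Set (PGPoint F 2), IsMinimalSaturating S μ →
      S.ncard ≤ min (q + μ) (q ^ 2 + q) := by
  subst hq
  have hsat (S : Set (PGPoint F 2)) (hS : Fintype.card F + μ ≤ S.ncard) :
      ∀ Q ∉ S, μ ≤ pairCount S Q := fun _ => PGPoint.le_pairCount_of_ncard_ge hμ hS
  refine ⟨fun S hS => ⟨hsat S hS.ge, fun hspan hne => ⟨hspan, hne, hsat S hS.ge⟩⟩,
    fun S hS => le_min (hS.ncard_le (by simp [sum_range_succ]; omega) hsat) ?_⟩
  have := Set.ncard_lt_ncard (Set.ssubset_univ_iff.2 hS.1.2.1)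
  simp only [PGPoint.ncard_univ, sum_range_succ, sum_range_zero, pow_zero, pow_one] at this
  omega
end

section
/- Let q ≥ 3 be a prime power, let ℓ be a line of PG(2,q), and let P₁, P₂ be two distinct points of PG(2,q) not lying on ℓ. Then A = ℓ ∪ {P₁, P₂} is a minimal (1,2)-saturating set of size q+3 in PG(2,q). -/
set_option linter.unusedSectionVars false
set_option maxHeartbeats 1000000

open Module

section Helpers

variable {F : Type} [Field F] [Fintype F]

/-- Two points inside a 1-dimensional subspace coincide. -/
lemma pt_eq_of_le_rank1 {P Q : PGPoint F 2} {W : Submodule F (Fin 3 → F)}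
    (hW : finrank F W = 1) (hP : P.1 ≤ W) (hQ : Q.1 ≤ W) : P = Q := by
  have h1 : P.1 = W := Submodule.eq_of_le_of_finrank_eq hP (P.2.trans hW.symm)
  have h2 : Q.1 = W := Submodule.eq_of_le_of_finrank_eq hQ (Q.2.trans hW.symm)
  exact Subtype.ext (h1.trans h2.symm)

lemma point_inf_eq_bot {P : PGPoint F 2} {W : Submodule F (Fin 3 → F)}
    (h : ¬ P.1 ≤ W) : P.1 ⊓ W = ⊥ := by
  rcases lt_or_eq_of_le (inf_le_left : P.1 ⊓ W ≤ P.1) with hlt | heq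
  · have hfr := Submodule.finrank_lt_finrank_of_lt hlt
    rw [P.2] at hfr
    exact Submodule.finrank_eq_zero.mp (by omega)
  · exact absurd (heq ▸ inf_le_right) h

/-- The join of two distinct points has dimension 2. -/
lemma join_rank {P Q : PGPoint F 2} (h : P ≠ Q) :
    finrank F ↥(P.1 ⊔ Q.1) = 2 := by
  have hne : ¬ P.1 ≤ Q.1 := by
    intro hle
    exact h (Subtype.ext (Submodule.eq_of_le_of_finrank_eq hle (P.2.trans Q.2.symm)))
  have hinf : P.1 ⊓ Q.1 = ⊥ := point_inf_eq_bot hne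
  have hfr := Submodule.finrank_sup_add_finrank_inf_eq P.1 Q.1
  rw [hinf, finrank_bot, P.2, Q.2] at hfr
  omega

/-- The line through two distinct points is unique. -/
lemma line_unique {P Q : PGPoint F 2} (h : P ≠ Q) {W : Submodule F (Fin 3 → F)}
    (hW : finrank F W = 2) (hP : P.1 ≤ W) (hQ : Q.1 ≤ W) : W = P.1 ⊔ Q.1 :=
  (Submodule.eq_of_le_of_finrank_eq (sup_le hP hQ) ((join_rank h).trans hW.symm)).symm

/-- Two distinct lines meet in a point. -/
lemma meet_rank {L M : PGLine F 2} (h : L ≠ M) :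
    finrank F ↥(L.1 ⊓ M.1) = 1 := by
  have hne : L.1 ≠ M.1 := fun hh => h (Subtype.ext hh)
  have htop : finrank F ↥(L.1 ⊔ M.1) = 3 := by
    have hle : finrank F ↥(L.1 ⊔ M.1) ≤ 3 := by
      have hh := Submodule.finrank_le (L.1 ⊔ M.1)
      rwa [Module.finrank_fin_fun] at hh
    have hlt : L.1 < L.1 ⊔ M.1 := by
      rcases lt_or_eq_of_le (le_sup_left : L.1 ≤ L.1 ⊔ M.1) with h' | h'
      · exact h'
      · have hMle : M.1 ≤ L.1 := h' ▸ le_sup_right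
        exact absurd (Submodule.eq_of_le_of_finrank_eq hMle (M.2.trans L.2.symm)).symm hne
    have hfr := Submodule.finrank_lt_finrank_of_lt hlt
    rw [L.2] at hfr
    omega
  have hfr := Submodule.finrank_sup_add_finrank_inf_eq L.1 M.1
  rw [htop, L.2, M.2] at hfr
  omega

/-- The line joining two distinct points. -/
noncomputable def joinLn (P Q : PGPoint F 2) (h : P ≠ Q) : PGLine F 2 :=
  ⟨P.1 ⊔ Q.1, join_rank h⟩

/-- The point of intersection of two distinct lines. -/
noncomputable def meetPt (L M : PGLine F 2) (h : L ≠ M) : PGPoint F 2 :=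
  ⟨L.1 ⊓ M.1, meet_rank h⟩

/-- A line contains exactly `q+1` points. -/
lemma card_pts_on (q : ℕ) (hq : Fintype.card F = q) (hq3 : 3 ≤ q)
    (W : Submodule F (Fin 3 → F)) (hW : finrank F W = 2) :
    {P : PGPoint F 2 | P.1 ≤ W}.ncard = q + 1 := by
  classical
  letI : Fintype (PGPoint F 2) := Fintype.ofFinite _
  letI : Fintype ↥W := Fintype.ofFinite _
  set S : Finset (PGPoint F 2) := Finset.univ.filter (fun P => P.1 ≤ W) with hS
  have hncard : {P : PGPoint F 2 | P.1 ≤ W}.ncard = S.card := by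
    rw [Set.ncard_eq_toFinset_card']
    congr 1
    ext P
    simp [hS]
  have hvne : ∀ v : {v : ↥W // v ≠ 0}, (v.1 : Fin 3 → F) ≠ 0 := by
    intro v hv
    exact v.2 (Subtype.ext hv)
  set φ : {v : ↥W // v ≠ 0} → PGPoint F 2 :=
    fun v => ⟨Submodule.span F {(v.1 : Fin 3 → F)}, finrank_span_singleton (hvne v)⟩ with hφ
  have hmem : ∀ v : {v : ↥W // v ≠ 0}, φ v ∈ S := by
    intro v
    simp only [hS, Finset.mem_filter, Finset.mem_univ, true_and, hφ]
    exact Submodule.span_le.mpr (Set.singleton_subset_iff.mpr v.1.2)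
  have hsum := Finset.card_eq_sum_card_fiberwise (f := φ) (s := Finset.univ) (t := S)
    (fun v _ => hmem v)
  have hfiber : ∀ P ∈ S, (Finset.univ.filter (fun v => φ v = P)).card = q - 1 := by
    intro P hP
    have hPW : P.1 ≤ W := by simpa [hS] using hP
    letI : Fintype ↥P.1 := Fintype.ofFinite _
    have hcardP : Fintype.card ↥P.1 = q := by
      have hh := card_eq_pow_finrank (K := F) (V := ↥P.1)
      rw [P.2, hq, pow_one] at hh
      exact hh
    rw [← Fintype.card_subtype]
    have hEquiv : {v : {v : ↥W // v ≠ 0} // φ v = P} ≃ {w : ↥P.1 // w ≠ 0} := by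
      refine ⟨fun v => ⟨⟨(v.1.1 : Fin 3 → F), ?_⟩, ?_⟩,
        fun w => ⟨⟨⟨(w.1 : Fin 3 → F), hPW w.1.2⟩, ?_⟩, ?_⟩, ?_, ?_⟩
      · have hh : Submodule.span F {(v.1.1 : Fin 3 → F)} = P.1 := congrArg Subtype.val v.2
        exact hh ▸ Submodule.mem_span_singleton_self _
      · intro hv
        exact hvne v.1 (congrArg Subtype.val hv)
      · intro hw
        apply w.2
        apply Subtype.ext
        simpa using congrArg Subtype.val hw
      · apply Subtype.ext
        have hw0 : (w.1 : Fin 3 → F) ≠ 0 := fun h => w.2 (Subtype.ext h)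
        have hle : Submodule.span F {(w.1 : Fin 3 → F)} ≤ P.1 :=
          Submodule.span_le.mpr (Set.singleton_subset_iff.mpr w.1.2)
        exact Submodule.eq_of_le_of_finrank_eq hle
          ((finrank_span_singleton hw0).trans P.2.symm)
      · intro v
        apply Subtype.ext; apply Subtype.ext; apply Subtype.ext; rfl
      · intro w
        apply Subtype.ext; apply Subtype.ext; rfl
    rw [Fintype.card_congr hEquiv]
    rw [Fintype.card_subtype_compl, hcardP, Fintype.card_subtype_eq (0 : ↥P.1)]
  have hcardN : Fintype.card {v : ↥W // v ≠ 0} = q ^ 2 - 1 := by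
    rw [Fintype.card_subtype_compl, Fintype.card_subtype_eq (0 : ↥W)]
    have hh := card_eq_pow_finrank (K := F) (V := ↥W)
    rw [hW, hq] at hh
    rw [hh]
  rw [Finset.card_univ] at hsum
  rw [Finset.sum_congr rfl hfiber, Finset.sum_const, smul_eq_mul] at hsum
  rw [hcardN] at hsum
  rw [hncard]
  obtain ⟨k, rfl⟩ : ∃ k, q = k + 1 := ⟨q - 1, by omega⟩
  have hk : 1 ≤ k := by omega
  have hexp : (k+1)^2 - 1 = k * (k + 2) := by
    have hh : (k+1)^2 = k*(k+2)+1 := by ring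
    omega
  rw [hexp] at hsum
  have hsimp : S.card * ((k+1) - 1) = S.card * k := by norm_num
  rw [hsimp] at hsum
  have hcard : S.card = k + 2 := by
    have h2 : S.card * k = (k + 2) * k := hsum.symm.trans (mul_comm k (k+2))
    exact Nat.eq_of_mul_eq_mul_right (by omega) h2
  omega

/-- On any line there is a point different from three given points. -/
lemma exists_pt_on (q : ℕ) (hq : Fintype.card F = q) (hq3 : 3 ≤ q)
    (m : PGLine F 2) (a b c : PGPoint F 2) :
    ∃ Q : PGPoint F 2, Q.1 ≤ m.1 ∧ Q ≠ a ∧ Q ≠ b ∧ Q ≠ c := by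
  by_contra h
  push_neg at h
  have hsub : {P : PGPoint F 2 | P.1 ≤ m.1} ⊆ {a, b, c} := by
    intro P hP
    by_cases h1 : P = a
    · exact Or.inl h1
    by_cases h2 : P = b
    · exact Or.inr (Or.inl h2)
    exact Or.inr (Or.inr (h P hP h1 h2))
  have hle := Set.ncard_le_ncard hsub (Set.toFinite _)
  rw [card_pts_on q hq hq3 m.1 m.2] at hle
  have h3 : ({a, b, c} : Set (PGPoint F 2)).ncard ≤ 3 := by
    have t1 := Set.ncard_insert_le a ({b, c} : Set (PGPoint F 2))
    have t2 := Set.ncard_insert_le b ({c} : Set (PGPoint F 2))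
    rw [Set.ncard_singleton] at t2
    omega
  omega

lemma line_ne_of_pt {P : PGPoint F 2} {m l : PGLine F 2}
    (hPm : P.1 ≤ m.1) (hPl : ¬ P.1 ≤ l.1) : m ≠ l := fun h => hPl (h ▸ hPm)

/-- If a point and a line don't meet, they span everything. -/
lemma sup_line_pt_eq_top {l : PGLine F 2} {P : PGPoint F 2}
    (h : ¬ P.1 ≤ l.1) : l.1 ⊔ P.1 = ⊤ := by
  have hinf : P.1 ⊓ l.1 = ⊥ := point_inf_eq_bot h
  have hfr := Submodule.finrank_sup_add_finrank_inf_eq P.1 l.1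
  rw [hinf, finrank_bot, P.2, l.2] at hfr
  have h3 : finrank F ↥(P.1 ⊔ l.1) = 3 := by omega
  rw [sup_comm]
  apply Submodule.eq_top_of_finrank_eq
  rw [h3, Module.finrank_fin_fun]

end Helpers

section Minimality

variable {F : Type} [Field F] [Fintype F]

/-- If `P₁` is removed, the set is no longer saturating. -/
lemma not_sat_missing_P {l : PGLine F 2} {P₁ P₂ : PGPoint F 2} (h12 : P₁ ≠ P₂)
    (h1 : ¬ P₁.1 ≤ l.1) (h2 : ¬ P₂.1 ≤ l.1) {T : Set (PGPoint F 2)}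
    (hT : T ⊆ {P : PGPoint F 2 | P.1 ≤ l.1} ∪ {P₁, P₂}) (hP1 : P₁ ∉ T) :
    ¬ IsSaturating T 2 := by
  rintro ⟨-, -, hsat⟩
  have h2le := hsat P₁ hP1
  have hml : joinLn P₁ P₂ h12 ≠ l := line_ne_of_pt (le_sup_left) h1
  set R := meetPt (joinLn P₁ P₂ h12) l hml with hR
  have hclassify : ∀ a ∈ T, a.1 ≤ l.1 ∨ a = P₂ := by
    intro a ha
    rcases hT ha with h | h
    · exact Or.inl h
    · rcases h with h | h
      · exact absurd (h ▸ ha) hP1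
      · exact Or.inr h
  -- the only possible secant of T through P₁ is {P₂, R}
  have hsub : {e : Set (PGPoint F 2) |
      ∃ A ∈ T, ∃ B ∈ T, A ≠ B ∧ e = {A, B} ∧ P₁.1 ≤ A.1 ⊔ B.1} ⊆ {({P₂, R} : Set _)} := by
    rintro e ⟨a, ha, b, hb, hab, rfl, hle⟩
    have key : ∀ x : PGPoint F 2, x.1 ≤ l.1 → P₁.1 ≤ P₂.1 ⊔ x.1 → x ≠ P₂ → x = R := by
      intro x hxl hlex hxP2
      have hW : finrank F ↥(P₂.1 ⊔ x.1) = 2 := join_rank hxP2.symm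
      have hWeq : P₂.1 ⊔ x.1 = P₁.1 ⊔ P₂.1 :=
        line_unique h12 hW hlex le_sup_left
      have hxj : x.1 ≤ P₁.1 ⊔ P₂.1 := by rw [← hWeq]; exact le_sup_right
      exact pt_eq_of_le_rank1 (meet_rank hml) (le_inf hxj hxl) le_rfl
    rcases hclassify a ha with hal | haP2
    · rcases hclassify b hb with hbl | hbP2
      · -- both on l: impossible
        exfalso
        have heq : l.1 = a.1 ⊔ b.1 := line_unique hab l.2 hal hbl
        exact h1 (heq ▸ hle)
      · -- b = P₂, a on l
        subst hbP2
        have hax : a = R := key a hal (by rwa [sup_comm] at hle) hab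
        subst hax
        simp [Set.pair_comm]
    · subst haP2
      rcases hclassify b hb with hbl | hbP2
      · have hbx : b = R := key b hbl hle (Ne.symm hab)
        subst hbx
        simp
      · exact absurd (hbP2 ▸ rfl) hab
  have hle1 := Set.ncard_le_ncard hsub (Set.toFinite _)
  rw [Set.ncard_singleton] at hle1
  unfold pairCount at h2le
  omega

/-- If a point of `l` is removed, the set is no longer saturating. -/
lemma not_sat_missing_x (q : ℕ) (hq : Fintype.card F = q) (hq3 : 3 ≤ q)
    {l : PGLine F 2} {P₁ P₂ : PGPoint F 2} (h12 : P₁ ≠ P₂)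
    (h1 : ¬ P₁.1 ≤ l.1) (h2 : ¬ P₂.1 ≤ l.1) {T : Set (PGPoint F 2)}
    (hT : T ⊆ {P : PGPoint F 2 | P.1 ≤ l.1} ∪ {P₁, P₂}) {x : PGPoint F 2}
    (hxl : x.1 ≤ l.1) (hx : x ∉ T) : ¬ IsSaturating T 2 := by
  rintro ⟨-, -, hsat⟩
  have hP1x : P₁ ≠ x := fun h => h1 (h ▸ hxl)
  set m := joinLn P₁ x hP1x with hm
  have hml : m ≠ l := line_ne_of_pt (le_sup_left : P₁.1 ≤ m.1) h1
  obtain ⟨Q, hQm, hQP1, hQx, hQP2⟩ := exists_pt_on q hq hq3 m P₁ x P₂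
  have hxm : x.1 ≤ m.1 := le_sup_right
  have hQl : ¬ Q.1 ≤ l.1 := by
    intro hQl
    exact hQx (pt_eq_of_le_rank1 (meet_rank hml) (le_inf hQm hQl) (le_inf hxm hxl))
  have hQT : Q ∉ T := by
    intro hQT
    rcases hT hQT with h | h
    · exact hQl h
    · rcases h with h | h
      · exact hQP1 h
      · exact hQP2 h
  have h2le := hsat Q hQT
  have hclassify : ∀ a ∈ T, a.1 ≤ l.1 ∨ a = P₁ ∨ a = P₂ := by
    intro a ha
    rcases hT ha with h | h
    · exact Or.inl h
    · rcases h with h | h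
      · exact Or.inr (Or.inl h)
      · exact Or.inr (Or.inr h)
  -- no secant of T through Q consists of two points of l
  have hC1 : ∀ a b : PGPoint F 2, a.1 ≤ l.1 → b.1 ≤ l.1 → a ≠ b →
      ¬ Q.1 ≤ a.1 ⊔ b.1 := by
    intro a b hal hbl hab hle
    have heq : l.1 = a.1 ⊔ b.1 := line_unique hab l.2 hal hbl
    exact hQl (heq ▸ hle)
  -- no secant of T through Q contains P₁ and a point of l
  have hC2 : ∀ b : PGPoint F 2, b.1 ≤ l.1 → b ∈ T → ¬ Q.1 ≤ P₁.1 ⊔ b.1 := by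
    intro b hbl hbT hle
    have hP1b : P₁ ≠ b := fun h => h1 (h ▸ hbl)
    have hW : finrank F ↥(P₁.1 ⊔ b.1) = 2 := join_rank hP1b
    have hWeq : P₁.1 ⊔ b.1 = Q.1 ⊔ P₁.1 := line_unique hQP1 hW hle le_sup_left
    have hmeq : m.1 = Q.1 ⊔ P₁.1 := line_unique hQP1 m.2 hQm le_sup_left
    have hbm : b.1 ≤ m.1 := by
      rw [hmeq, ← hWeq]
      exact le_sup_right
    have : b = x := pt_eq_of_le_rank1 (meet_rank hml) (le_inf hbm hbl) (le_inf hxm hxl)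
    exact hx (this ▸ hbT)
  unfold pairCount at h2le
  by_cases hcase : x.1 ≤ P₁.1 ⊔ P₂.1
  · -- m is the line P₁P₂; the only secant is {P₁, P₂}
    have hmeq : P₁.1 ⊔ P₂.1 = m.1 := line_unique hP1x (join_rank h12) le_sup_left hcase
    have hC3 : ∀ b : PGPoint F 2, b.1 ≤ l.1 → b ∈ T → ¬ Q.1 ≤ P₂.1 ⊔ b.1 := by
      intro b hbl hbT hle
      have hP2b : P₂ ≠ b := fun h => h2 (h ▸ hbl)
      have hW : finrank F ↥(P₂.1 ⊔ b.1) = 2 := join_rank hP2b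
      have hWeq : P₂.1 ⊔ b.1 = Q.1 ⊔ P₂.1 := line_unique hQP2 hW hle le_sup_left
      have hP2m : P₂.1 ≤ m.1 := hmeq ▸ (le_sup_right : P₂.1 ≤ P₁.1 ⊔ P₂.1)
      have hmeq2 : m.1 = Q.1 ⊔ P₂.1 := line_unique hQP2 m.2 hQm hP2m
      have hbm : b.1 ≤ m.1 := by
        rw [hmeq2, ← hWeq]
        exact le_sup_right
      have : b = x := pt_eq_of_le_rank1 (meet_rank hml) (le_inf hbm hbl) (le_inf hxm hxl)
      exact hx (this ▸ hbT)
    have hsub : {e : Set (PGPoint F 2) |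
        ∃ A ∈ T, ∃ B ∈ T, A ≠ B ∧ e = {A, B} ∧ Q.1 ≤ A.1 ⊔ B.1} ⊆
        {({P₁, P₂} : Set _)} := by
      rintro e ⟨a, ha, b, hb, hab, rfl, hle⟩
      rcases hclassify a ha with hal | haP1 | haP2
      · rcases hclassify b hb with hbl | hbP1 | hbP2
        · exact absurd hle (hC1 a b hal hbl hab)
        · subst hbP1
          rw [sup_comm] at hle
          exact absurd hle (hC2 a hal ha)
        · subst hbP2
          rw [sup_comm] at hle
          exact absurd hle (hC3 a hal ha)
      · subst haP1
        rcases hclassify b hb with hbl | hbP1 | hbP2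
        · exact absurd hle (hC2 b hbl hb)
        · exact absurd hbP1.symm hab
        · subst hbP2
          simp
      · subst haP2
        rcases hclassify b hb with hbl | hbP1 | hbP2
        · exact absurd hle (hC3 b hbl hb)
        · subst hbP1
          simp [Set.pair_comm]
        · exact absurd hbP2.symm hab
    have hle1 := Set.ncard_le_ncard hsub (Set.toFinite _)
    rw [Set.ncard_singleton] at hle1
    omega
  · -- m is not the line P₁P₂; the only secant is {P₂, R}
    have hjQ2l : joinLn Q P₂ hQP2 ≠ l := line_ne_of_pt (le_sup_right : P₂.1 ≤ _) h2
    set R := meetPt (joinLn Q P₂ hQP2) l hjQ2l with hRdef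
    have hC4 : ¬ Q.1 ≤ P₁.1 ⊔ P₂.1 := by
      intro hle
      have hW : finrank F ↥(P₁.1 ⊔ P₂.1) = 2 := join_rank h12
      have hWeq : P₁.1 ⊔ P₂.1 = Q.1 ⊔ P₁.1 := line_unique hQP1 hW hle le_sup_left
      have hmeq : m.1 = Q.1 ⊔ P₁.1 := line_unique hQP1 m.2 hQm le_sup_left
      exact hcase (hWeq ▸ hmeq ▸ hxm : x.1 ≤ P₁.1 ⊔ P₂.1)
    have hC5 : ∀ b : PGPoint F 2, b.1 ≤ l.1 → Q.1 ≤ P₂.1 ⊔ b.1 → b = R := by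
      intro b hbl hle
      have hP2b : P₂ ≠ b := fun h => h2 (h ▸ hbl)
      have hW : finrank F ↥(P₂.1 ⊔ b.1) = 2 := join_rank hP2b
      have hWeq : P₂.1 ⊔ b.1 = Q.1 ⊔ P₂.1 := line_unique hQP2 hW hle le_sup_left
      have hbj : b.1 ≤ Q.1 ⊔ P₂.1 := by rw [← hWeq]; exact le_sup_right
      exact pt_eq_of_le_rank1 (meet_rank hjQ2l) (le_inf hbj hbl) le_rfl
    have hsub : {e : Set (PGPoint F 2) |
        ∃ A ∈ T, ∃ B ∈ T, A ≠ B ∧ e = {A, B} ∧ Q.1 ≤ A.1 ⊔ B.1} ⊆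
        {({P₂, R} : Set _)} := by
      rintro e ⟨a, ha, b, hb, hab, rfl, hle⟩
      rcases hclassify a ha with hal | haP1 | haP2
      · rcases hclassify b hb with hbl | hbP1 | hbP2
        · exact absurd hle (hC1 a b hal hbl hab)
        · subst hbP1
          rw [sup_comm] at hle
          exact absurd hle (hC2 a hal ha)
        · subst hbP2
          rw [sup_comm] at hle
          have hax : a = R := hC5 a hal hle
          subst hax
          simp [Set.pair_comm]
      · subst haP1
        rcases hclassify b hb with hbl | hbP1 | hbP2
        · exact absurd hle (hC2 b hbl hb)
        · exact absurd hbP1.symm hab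
        · subst hbP2
          exact absurd hle hC4
      · subst haP2
        rcases hclassify b hb with hbl | hbP1 | hbP2
        · have hbx : b = R := hC5 b hbl hle
          subst hbx
          simp
        · subst hbP1
          rw [sup_comm] at hle
          exact absurd hle hC4
        · exact absurd hbP2.symm hab
    have hle1 := Set.ncard_le_ncard hsub (Set.toFinite _)
    rw [Set.ncard_singleton] at hle1
    omega

end Minimality

/-- Let `q ≥ 3`, let `ℓ` be a line of `PG(2,q)` and let
`P₁ ≠ P₂` be points not on `ℓ`. Then `A = ℓ ∪ {P₁,P₂}` is a minimal
`(1,2)`-saturating set of size `q+3`. -/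
theorem stmt_13 (F : Type) [Field F] [Fintype F] (q : ℕ)
    (hq : Fintype.card F = q) (hq3 : 3 ≤ q)
    (l : PGLine F 2) (P₁ P₂ : PGPoint F 2) (h12 : P₁ ≠ P₂)
    (h1 : ¬ P₁.1 ≤ l.1) (h2 : ¬ P₂.1 ≤ l.1) :
    ({P : PGPoint F 2 | P.1 ≤ l.1} ∪ {P₁, P₂}).ncard = q + 3 ∧
    IsMinimalSaturating ({P : PGPoint F 2 | P.1 ≤ l.1} ∪ {P₁, P₂}) 2 := by
  have hcardl : {P : PGPoint F 2 | P.1 ≤ l.1}.ncard = q + 1 :=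
    card_pts_on q hq hq3 l.1 l.2
  constructor
  · -- cardinality
    rw [Set.ncard_union_eq ?_ (Set.toFinite _) (Set.toFinite _)]
    · rw [hcardl, Set.ncard_pair h12]
    · rw [Set.disjoint_left]
      rintro P hP (rfl | rfl)
      · exact h1 hP
      · exact h2 hP
  constructor
  · -- saturating
    refine ⟨?_, ?_, ?_⟩
    · -- spans
      unfold Spans
      apply le_antisymm le_top
      -- find two distinct points on l
      have hlbot : l.1 ≠ ⊥ := by
        intro h
        have := l.2
        rw [h, finrank_bot] at this
        omega
      obtain ⟨v, hvl, hv0⟩ := Submodule.exists_mem_ne_zero_of_ne_bot hlbot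
      set a : PGPoint F 2 := ⟨Submodule.span F {v}, finrank_span_singleton hv0⟩ with hadef
      have hal : a.1 ≤ l.1 := Submodule.span_le.mpr (Set.singleton_subset_iff.mpr hvl)
      obtain ⟨b, hbl', hba, -, -⟩ := exists_pt_on q hq hq3 l a a a
      have hlab : l.1 = a.1 ⊔ b.1 := line_unique (Ne.symm hba) l.2 hal hbl'
      have hsup : l.1 ⊔ P₁.1 ≤ ⨆ P ∈ ({P : PGPoint F 2 | P.1 ≤ l.1} ∪ {P₁, P₂}), P.1 := by
        refine sup_le (le_trans (le_of_eq hlab) (sup_le ?_ ?_)) ?_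
        · exact le_iSup₂_of_le a (Or.inl hal) le_rfl
        · exact le_iSup₂_of_le b (Or.inl hbl') le_rfl
        · exact le_iSup₂_of_le P₁ (Or.inr (Or.inl rfl)) le_rfl
      rw [sup_line_pt_eq_top h1] at hsup
      exact hsup
    · -- not everything
      rw [Ne, Set.eq_univ_iff_forall]
      push_neg
      have hml : joinLn P₁ P₂ h12 ≠ l := line_ne_of_pt (le_sup_left) h1
      set x0 := meetPt (joinLn P₁ P₂ h12) l hml with hx0
      obtain ⟨Q, hQm, hQP1, hQP2, hQx0⟩ := exists_pt_on q hq hq3 (joinLn P₁ P₂ h12) P₁ P₂ x0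
      refine ⟨Q, ?_⟩
      rintro (hQl | rfl | rfl)
      · exact hQx0 (pt_eq_of_le_rank1 (meet_rank hml) (le_inf hQm hQl) le_rfl)
      · exact hQP1 rfl
      · exact hQP2 rfl
    · -- every missing point lies on at least 2 secants
      intro Q hQ
      simp only [Set.mem_union, Set.mem_setOf_eq, Set.mem_insert_iff,
        Set.mem_singleton_iff, not_or] at hQ
      obtain ⟨hQl, hQ1, hQ2⟩ := hQ
      have hj1l : joinLn Q P₁ hQ1 ≠ l := line_ne_of_pt (le_sup_right : P₁.1 ≤ _) h1
      have hj2l : joinLn Q P₂ hQ2 ≠ l := line_ne_of_pt (le_sup_right : P₂.1 ≤ _) h2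
      set R₁ := meetPt (joinLn Q P₁ hQ1) l hj1l with hR1
      set R₂ := meetPt (joinLn Q P₂ hQ2) l hj2l with hR2
      have hR1l : R₁.1 ≤ l.1 := inf_le_right
      have hR2l : R₂.1 ≤ l.1 := inf_le_right
      have hP1R1 : P₁ ≠ R₁ := fun h => h1 (h ▸ hR1l)
      have hP2R2 : P₂ ≠ R₂ := fun h => h2 (h ▸ hR2l)
      have hQle1 : Q.1 ≤ P₁.1 ⊔ R₁.1 := by
        have heq : (joinLn Q P₁ hQ1).1 = P₁.1 ⊔ R₁.1 :=
          line_unique hP1R1 (joinLn Q P₁ hQ1).2 le_sup_right inf_le_left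
        exact heq ▸ (le_sup_left : Q.1 ≤ (joinLn Q P₁ hQ1).1)
      have hQle2 : Q.1 ≤ P₂.1 ⊔ R₂.1 := by
        have heq : (joinLn Q P₂ hQ2).1 = P₂.1 ⊔ R₂.1 :=
          line_unique hP2R2 (joinLn Q P₂ hQ2).2 le_sup_right inf_le_left
        exact heq ▸ (le_sup_left : Q.1 ≤ (joinLn Q P₂ hQ2).1)
      have hmem1 : P₁ ∈ ({P : PGPoint F 2 | P.1 ≤ l.1} ∪ {P₁, P₂}) :=
        Or.inr (Or.inl rfl)
      have hmem2 : P₂ ∈ ({P : PGPoint F 2 | P.1 ≤ l.1} ∪ {P₁, P₂}) :=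
        Or.inr (Or.inr rfl)
      have hmemR1 : R₁ ∈ ({P : PGPoint F 2 | P.1 ≤ l.1} ∪ {P₁, P₂}) := Or.inl hR1l
      have hmemR2 : R₂ ∈ ({P : PGPoint F 2 | P.1 ≤ l.1} ∪ {P₁, P₂}) := Or.inl hR2l
      have hne : ({P₁, R₁} : Set (PGPoint F 2)) ≠ {P₂, R₂} := by
        intro h
        have : P₁ ∈ ({P₂, R₂} : Set (PGPoint F 2)) := h ▸ Set.mem_insert _ _
        rcases this with h' | h'
        · exact h12 h'
        · exact h1 (h' ▸ hR2l)
      have hsub : ({({P₁, R₁} : Set (PGPoint F 2)), {P₂, R₂}} : Set (Set (PGPoint F 2))) ⊆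
          {e : Set (PGPoint F 2) |
            ∃ A ∈ ({P : PGPoint F 2 | P.1 ≤ l.1} ∪ {P₁, P₂}), ∃ B ∈
              ({P : PGPoint F 2 | P.1 ≤ l.1} ∪ {P₁, P₂}),
              A ≠ B ∧ e = {A, B} ∧ Q.1 ≤ A.1 ⊔ B.1} := by
        rintro e (rfl | rfl)
        · exact ⟨P₁, hmem1, R₁, hmemR1, hP1R1, rfl, hQle1⟩
        · exact ⟨P₂, hmem2, R₂, hmemR2, hP2R2, rfl, hQle2⟩
      have hle2 := Set.ncard_le_ncard hsub (Set.toFinite _)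
      rw [Set.ncard_pair hne] at hle2
      unfold pairCount
      exact hle2
  · -- minimality
    intro T hTss
    obtain ⟨x, hxA, hxT⟩ := Set.exists_of_ssubset hTss
    have hT : T ⊆ {P : PGPoint F 2 | P.1 ≤ l.1} ∪ {P₁, P₂} := hTss.1
    rcases hxA with hxl | hx1 | hx2
    · exact not_sat_missing_x q hq hq3 h12 h1 h2 hT hxl hxT
    · have hP1T : P₁ ∉ T := hx1 ▸ hxT
      exact not_sat_missing_P h12 h1 h2 hT hP1T
    · have hP2T : P₂ ∉ T := hx2 ▸ hxT
      have hT' : T ⊆ {P : PGPoint F 2 | P.1 ≤ l.1} ∪ {P₂, P₁} := by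
        rwa [Set.pair_comm P₂ P₁]
      exact not_sat_missing_P h12.symm h2 h1 hT' hP2T
end

section
/- Let q be a prime power, let 2 ≤ L ≤ q, let G be a point of PG(2,q), and let S be the union of L distinct lines all passing through G. Then #S = 1 + Lq, and every point Q ∈ PG(2,q) \ S lies on exactly C(L,2)·q unordered pairs of distinct points of S collinear with Q; hence S is a (1, C(L,2)q)-OS set. -/
open Module

section Aux

open Module Submodule

variable {F : Type} [Field F] [Fintype F]

instance submoduleFinite (M : Type*) [AddCommGroup M] [Module F M] [Finite M] :
    Finite (Submodule F M) :=
  Finite.of_injective (fun W => (W : Set M)) SetLike.coe_injective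

omit [Fintype F] in
/-- A 1-dim subspace contained in a 1-dim subspace equals it. -/
lemma pt_eq_pt {V : Type*} [AddCommGroup V] [Module F V] [FiniteDimensional F V]
    {P Q : Submodule F V} (h1 : finrank F P = 1) (h2 : finrank F Q = 1) (hle : P ≤ Q) :
    P = Q :=
  Submodule.eq_of_le_of_finrank_eq hle (by rw [h1, h2])

omit [Fintype F] in
lemma pgpt_eq_pgpt {P Q : PGPoint F 2} (hle : P.1 ≤ Q.1) : P = Q :=
  Subtype.ext (pt_eq_pt P.2 Q.2 hle)

omit [Fintype F] in
lemma sup_points_finrank {A B : PGPoint F 2} (h : A ≠ B) :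
    finrank F ↥(A.1 ⊔ B.1) = 2 := by
  have hbot : A.1 ⊓ B.1 = ⊥ := by
    by_contra hb
    obtain ⟨x, hx, hx0⟩ := Submodule.exists_mem_ne_zero_of_ne_bot hb
    have hA : Submodule.span F {x} = A.1 :=
      pt_eq_pt (finrank_span_singleton hx0) A.2
        ((Submodule.span_singleton_le_iff_mem x _).mpr hx.1)
    have hB : Submodule.span F {x} = B.1 :=
      pt_eq_pt (finrank_span_singleton hx0) B.2
        ((Submodule.span_singleton_le_iff_mem x _).mpr hx.2)
    exact h (Subtype.ext (hA.symm.trans hB))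
  have hsum := Submodule.finrank_sup_add_finrank_inf_eq A.1 B.1
  rw [A.2, B.2, hbot, finrank_bot, add_zero] at hsum
  exact hsum

omit [Fintype F] in
lemma lines_finrank {l m : PGLine F 2} (h : l ≠ m) :
    finrank F ↥(l.1 ⊔ m.1) = 3 ∧ finrank F ↥(l.1 ⊓ m.1) = 1 := by
  have hV : finrank F (Fin (2 + 1) → F) = 3 := by
    rw [Module.finrank_pi]; simp
  have hsuple : finrank F ↥(l.1 ⊔ m.1) ≤ 3 := by
    have h1 := Submodule.finrank_le (l.1 ⊔ m.1)
    rwa [hV] at h1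
  have hinfle : finrank F ↥(l.1 ⊓ m.1) ≤ 2 := by
    have h1 := Submodule.finrank_mono (inf_le_left : l.1 ⊓ m.1 ≤ l.1)
    rwa [l.2] at h1
  have hinfne : finrank F ↥(l.1 ⊓ m.1) ≠ 2 := by
    intro h2
    exact h (Subtype.ext ((Submodule.eq_of_le_of_finrank_eq inf_le_left
      (by rw [h2, l.2])).symm.trans
      (Submodule.eq_of_le_of_finrank_eq inf_le_right (by rw [h2, m.2]))))
  have hsum := Submodule.finrank_sup_add_finrank_inf_eq l.1 m.1
  rw [l.2, m.2] at hsum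
  omega

/-- Key counting lemma. -/
lemma ncard_pts_mul (W : Submodule F (Fin (2 + 1) → F)) :
    {P : PGPoint F 2 | P.1 ≤ W}.ncard * (Fintype.card F - 1)
      = Fintype.card F ^ (finrank F W) - 1 := by
  classical
  letI : Fintype (Submodule F (Fin (2 + 1) → F)) := Fintype.ofFinite _
  set t : Finset (Submodule F (Fin (2 + 1) → F)) :=
    Finset.univ.filter (fun P => finrank F P = 1 ∧ P ≤ W) with ht
  set s : Finset (Fin (2 + 1) → F) := (W : Set (Fin (2 + 1) → F)).toFinset.erase 0 with hs
  have hscard : s.card = Fintype.card F ^ (finrank F W) - 1 := by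
    rw [hs, Finset.card_erase_of_mem (by simp [Submodule.zero_mem]), Set.toFinset_card]
    congr 1
    exact card_eq_pow_finrank (K := F) (V := W)
  have hmaps : ∀ v ∈ s, Submodule.span F {v} ∈ t := by
    intro v hv
    rw [hs] at hv
    obtain ⟨hv0, hvW⟩ := Finset.mem_erase.mp hv
    rw [Set.mem_toFinset] at hvW
    rw [ht, Finset.mem_filter]
    exact ⟨Finset.mem_univ _, finrank_span_singleton hv0,
      (Submodule.span_singleton_le_iff_mem v W).mpr hvW⟩
  have key := Finset.card_eq_sum_card_fiberwise hmaps
  have hfib : ∀ P ∈ t,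
      (s.filter (fun v => Submodule.span F {v} = P)).card = Fintype.card F - 1 := by
    intro P hP
    rw [ht, Finset.mem_filter] at hP
    obtain ⟨-, hP1, hPW⟩ := hP
    have hfeq : s.filter (fun v => Submodule.span F {v} = P)
        = (P : Set (Fin (2 + 1) → F)).toFinset.erase 0 := by
      ext v
      simp only [Finset.mem_filter, Finset.mem_erase, Set.mem_toFinset, SetLike.mem_coe, hs]
      constructor
      · rintro ⟨⟨hv0, _⟩, rfl⟩
        exact ⟨hv0, Submodule.mem_span_singleton_self v⟩
      · rintro ⟨hv0, hvP⟩
        refine ⟨⟨hv0, ?_⟩, ?_⟩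
        · exact hPW hvP
        · exact pt_eq_pt (finrank_span_singleton hv0) hP1
            ((Submodule.span_singleton_le_iff_mem v P).mpr hvP)
    rw [hfeq, Finset.card_erase_of_mem (by simp [Submodule.zero_mem]), Set.toFinset_card]
    congr 1
    have : Fintype.card P = Fintype.card F := by
      rw [card_eq_pow_finrank (K := F) (V := P), hP1, pow_one]
    exact this
  rw [Finset.sum_congr rfl hfib, Finset.sum_const, smul_eq_mul, hscard] at key
  rw [key]
  congr 1
  rw [← Nat.card_coe_set_eq]
  rw [Nat.card_eq_of_bijective (fun P => (⟨P.1.1, P.1.2, P.2⟩ :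
    {P : Submodule F (Fin (2 + 1) → F) // finrank F P = 1 ∧ P ≤ W})) ?_]
  · rw [Nat.card_eq_fintype_card, Fintype.card_subtype]
  · constructor
    · rintro ⟨⟨P, h1⟩, h2⟩ ⟨⟨P', h1'⟩, h2'⟩ h
      simp only [Subtype.mk.injEq] at h
      simp [h]
    · rintro ⟨P, h1, h2⟩
      exact ⟨⟨⟨P, h1⟩, h2⟩, rfl⟩

end Aux

section Aux2

open Module Submodule

lemma nat_sq_fac (c : ℕ) (h : 2 ≤ c) : c ^ 2 - 1 = (c + 1) * (c - 1) := by
  obtain ⟨r, rfl⟩ := Nat.exists_eq_add_of_le h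
  have h1 : (2 + r) ^ 2 = r * r + 4 * r + 4 := by ring
  have h2 : (2 + r + 1) * (2 + r - 1) = (r + 3) * (r + 1) := by congr 1 <;> omega
  have h3 : (r + 3) * (r + 1) = r * r + 4 * r + 3 := by ring
  omega

variable {F : Type} [Field F] [Fintype F]

omit [Fintype F] in
lemma pair_line {A B : PGPoint F 2} {m : PGLine F 2} (h : A ≠ B)
    (hA : A.1 ≤ m.1) (hB : B.1 ≤ m.1) : A.1 ⊔ B.1 = m.1 :=
  Submodule.eq_of_le_of_finrank_eq (sup_le hA hB) (by rw [sup_points_finrank h, m.2])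

lemma ncard_line_pts (hq2 : 2 ≤ Fintype.card F) (m : PGLine F 2) :
    {P : PGPoint F 2 | P.1 ≤ m.1}.ncard = Fintype.card F + 1 := by
  have h := ncard_pts_mul m.1
  rw [m.2, nat_sq_fac _ hq2] at h
  exact Nat.eq_of_mul_eq_mul_right (by omega) h

end Aux2

set_option maxHeartbeats 1000000 in
open Module Submodule in
/-- Let `2 ≤ L ≤ q` and let `S` be the union of `L` distinct
lines of `PG(2,q)` all through a common point `G`. Then `#S = 1 + Lq` and every
point `Q ∉ S` lies on exactly `C(L,2)·q` unordered pairs of distinct points of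
`S` collinear with `Q`; hence `S` is a `(1, C(L,2)q)`-OS set. -/
theorem stmt_17 (F : Type) [Field F] [Fintype F] (q L : ℕ)
    (hq : Fintype.card F = q) (hL2 : 2 ≤ L) (hLq : L ≤ q)
    (G : PGPoint F 2) (lines : Finset (PGLine F 2))
    (hcard : lines.card = L) (hG : ∀ l ∈ lines, G.1 ≤ l.1) :
    {P : PGPoint F 2 | ∃ l ∈ lines, P.1 ≤ l.1}.ncard = 1 + L * q ∧
    (∀ Q : PGPoint F 2, Q ∉ {P : PGPoint F 2 | ∃ l ∈ lines, P.1 ≤ l.1} →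
      pairCount {P : PGPoint F 2 | ∃ l ∈ lines, P.1 ≤ l.1} Q = Nat.choose L 2 * q) ∧
    IsOS {P : PGPoint F 2 | ∃ l ∈ lines, P.1 ≤ l.1} (Nat.choose L 2 * q) := by
  classical
  subst hq
  set S := {P : PGPoint F 2 | ∃ l ∈ lines, P.1 ≤ l.1} with hSdef
  letI : Fintype (PGPoint F 2) := Fintype.ofFinite _
  letI : Fintype (PGLine F 2) := Fintype.ofFinite _
  have hq2 : 2 ≤ Fintype.card F := le_trans hL2 hLq
  obtain ⟨l0, hl0⟩ : lines.Nonempty := Finset.card_pos.mp (by omega)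
  have hGS : G ∈ S := ⟨l0, hl0, hG l0 hl0⟩
  have hV3 : finrank F (Fin (2 + 1) → F) = 3 := by rw [Module.finrank_pi]; simp
  -- Part 1 : cardinality of S
  have hpts : ∀ m : PGLine F 2,
      {P : PGPoint F 2 | P.1 ≤ m.1}.toFinset.card = Fintype.card F + 1 := fun m => by
    rw [← Set.ncard_eq_toFinset_card']; exact ncard_line_pts hq2 m
  have hS1 : S.ncard = 1 + L * Fintype.card F := by
    rw [Set.ncard_eq_toFinset_card']
    have hST : S.toFinset = insert G (lines.biUnion fun l =>
        {P : PGPoint F 2 | P.1 ≤ l.1}.toFinset.erase G) := by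
      ext P
      simp only [Set.mem_toFinset, Finset.mem_insert, Finset.mem_biUnion, Finset.mem_erase,
        Set.mem_setOf_eq, hSdef]
      constructor
      · rintro ⟨l, hl, hPl⟩
        by_cases hPG : P = G
        · exact Or.inl hPG
        · exact Or.inr ⟨l, hl, hPG, hPl⟩
      · rintro (rfl | ⟨l, hl, _, hPl⟩)
        · exact ⟨l0, hl0, hG l0 hl0⟩
        · exact ⟨l, hl, hPl⟩
    have hdisj : ∀ l1 ∈ lines, ∀ l2 ∈ lines, l1 ≠ l2 →
        Disjoint ({P : PGPoint F 2 | P.1 ≤ l1.1}.toFinset.erase G)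
          ({P : PGPoint F 2 | P.1 ≤ l2.1}.toFinset.erase G) := by
      intro l1 _ l2 _ hne
      rw [Finset.disjoint_left]
      intro P hP1 hP2
      rw [Finset.mem_erase, Set.mem_toFinset] at hP1 hP2
      obtain ⟨hPG, hPl1⟩ := hP1
      obtain ⟨-, hPl2⟩ := hP2
      have hinf1 : finrank F ↥(l1.1 ⊓ l2.1) = 1 := (lines_finrank hne).2
      have hGinf : G.1 = l1.1 ⊓ l2.1 :=
        pt_eq_pt G.2 hinf1 (le_inf (hG l1 ‹l1 ∈ lines›) (hG l2 ‹l2 ∈ lines›))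
      exact hPG (pgpt_eq_pgpt (hGinf ▸ le_inf hPl1 hPl2))
    rw [hST, Finset.card_insert_of_notMem (by simp), Finset.card_biUnion hdisj]
    have hterm : ∀ l ∈ lines,
        ({P : PGPoint F 2 | P.1 ≤ l.1}.toFinset.erase G).card = Fintype.card F := by
      intro l hl
      rw [Finset.card_erase_of_mem (by rw [Set.mem_toFinset]; exact hG l hl), hpts l]
      omega
    rw [Finset.sum_congr rfl hterm, Finset.sum_const, smul_eq_mul, hcard]
    omega
  -- Part 2 : pair counts
  have hpair : ∀ Q : PGPoint F 2, Q ∉ S →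
      pairCount S Q = Nat.choose L 2 * Fintype.card F := by
    intro Q hQ
    have hQl : ∀ l ∈ lines, ¬ Q.1 ≤ l.1 := fun l hl h => hQ ⟨l, hl, h⟩
    have hQG : Q ≠ G := fun h => hQ (h ▸ hGS)
    set m₀ : PGLine F 2 := ⟨G.1 ⊔ Q.1, sup_points_finrank (Ne.symm hQG)⟩ with hm₀
    set Em : PGLine F 2 → Finset (Set (PGPoint F 2)) := fun m =>
      ((S ∩ {P : PGPoint F 2 | P.1 ≤ m.1}).toFinset.powersetCard 2).image
        (fun f : Finset (PGPoint F 2) => (↑f : Set (PGPoint F 2))) with hEm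
    have hEmMem : ∀ (m : PGLine F 2) (e : Set (PGPoint F 2)),
        e ∈ Em m ↔ ∃ A B : PGPoint F 2,
          A ≠ B ∧ A ∈ S ∧ A.1 ≤ m.1 ∧ B ∈ S ∧ B.1 ≤ m.1 ∧ e = {A, B} := by
      intro m e
      simp only [hEm, Finset.mem_image, Finset.mem_powersetCard]
      constructor
      · rintro ⟨f, ⟨hsub, hcard2⟩, rfl⟩
        obtain ⟨A, B, hAB, rfl⟩ := Finset.card_eq_two.mp hcard2
        have hA := hsub (Finset.mem_insert_self A {B})
        have hB := hsub (Finset.mem_insert_of_mem (Finset.mem_singleton_self B))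
        rw [Set.mem_toFinset] at hA hB
        exact ⟨A, B, hAB, hA.1, hA.2, hB.1, hB.2, by simp⟩
      · rintro ⟨A, B, hAB, hAS, hAm, hBS, hBm, rfl⟩
        refine ⟨{A, B}, ⟨?_, ?_⟩, by simp⟩
        · intro x hx
          rw [Finset.mem_insert, Finset.mem_singleton] at hx
          rw [Set.mem_toFinset]
          rcases hx with rfl | rfl
          · exact ⟨hAS, hAm⟩
          · exact ⟨hBS, hBm⟩
        · rw [Finset.card_insert_of_notMem (by simpa using hAB), Finset.card_singleton]
    set MQ : Finset (PGLine F 2) := {m : PGLine F 2 | Q.1 ≤ m.1}.toFinset with hMQ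
    have hm₀MQ : m₀ ∈ MQ := by
      rw [hMQ, Set.mem_toFinset]
      exact (le_sup_right : Q.1 ≤ G.1 ⊔ Q.1)
    have hE : {e : Set (PGPoint F 2) | ∃ A ∈ S, ∃ B ∈ S, A ≠ B ∧ e = {A, B}
        ∧ Q.1 ≤ A.1 ⊔ B.1}.toFinset = MQ.biUnion Em := by
      ext e
      simp only [Set.mem_toFinset, Set.mem_setOf_eq, Finset.mem_biUnion, hMQ]
      constructor
      · rintro ⟨A, hAS, B, hBS, hAB, rfl, hQle⟩
        refine ⟨⟨A.1 ⊔ B.1, sup_points_finrank hAB⟩, ?_, ?_⟩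
        · exact hQle
        · exact (hEmMem _ _).mpr ⟨A, B, hAB, hAS, le_sup_left, hBS, le_sup_right, rfl⟩
      · rintro ⟨m, hm, he⟩
        obtain ⟨A, B, hAB, hAS, hAm, hBS, hBm, rfl⟩ := (hEmMem m _).mp he
        exact ⟨A, hAS, B, hBS, hAB, rfl, by rw [pair_line hAB hAm hBm]; exact hm⟩
    have hdisjE : ∀ m1 ∈ MQ, ∀ m2 ∈ MQ, m1 ≠ m2 → Disjoint (Em m1) (Em m2) := by
      intro m1 _ m2 _ hne
      rw [Finset.disjoint_left]
      intro e he1 he2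
      obtain ⟨A, B, hAB, hAS, hAm, hBS, hBm, rfl⟩ := (hEmMem m1 e).mp he1
      obtain ⟨A', B', hAB', _, hAm', _, hBm', heq⟩ := (hEmMem m2 _).mp he2
      have hA'm1 : A'.1 ≤ m1.1 := by
        have hmem : A' ∈ ({A, B} : Set (PGPoint F 2)) := by
          rw [heq]; exact Set.mem_insert _ _
        rcases hmem with h | h
        · rw [h]; exact hAm
        · rw [Set.mem_singleton_iff] at h; rw [h]; exact hBm
      have hB'm1 : B'.1 ≤ m1.1 := by
        have hmem : B' ∈ ({A, B} : Set (PGPoint F 2)) := by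
          rw [heq]; exact Set.mem_insert_of_mem _ rfl
        rcases hmem with h | h
        · rw [h]; exact hAm
        · rw [Set.mem_singleton_iff] at h; rw [h]; exact hBm
      exact hne (Subtype.ext ((pair_line hAB' hA'm1 hB'm1).symm.trans
        (pair_line hAB' hAm' hBm')))
    have hk : ∀ m : PGLine F 2, (Em m).card
        = ((S ∩ {P : PGPoint F 2 | P.1 ≤ m.1}).toFinset.card).choose 2 := by
      intro m
      simp only [hEm]
      rw [Finset.card_image_of_injective _ Finset.coe_injective,
        Finset.card_powersetCard]
    have hSm₀ : S ∩ {P : PGPoint F 2 | P.1 ≤ m₀.1} = {G} := by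
      ext P
      simp only [Set.mem_inter_iff, Set.mem_setOf_eq, Set.mem_singleton_iff, hSdef]
      constructor
      · rintro ⟨⟨l, hl, hPl⟩, hPm⟩
        have hml : m₀ ≠ l := by
          intro h
          exact hQl l hl (by rw [← h]; exact le_sup_right)
        have hinf : finrank F ↥(m₀.1 ⊓ l.1) = 1 := (lines_finrank hml).2
        have hGeq : G.1 = m₀.1 ⊓ l.1 :=
          pt_eq_pt G.2 hinf (le_inf (le_sup_left : G.1 ≤ G.1 ⊔ Q.1) (hG l hl))
        exact pgpt_eq_pgpt (by rw [hGeq]; exact le_inf hPm hPl)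
      · rintro rfl
        exact ⟨⟨l0, hl0, hG _ hl0⟩, le_sup_left⟩
    have hQm : ∀ m ∈ MQ.erase m₀, Q.1 ≤ m.1 := by
      intro m hm
      have := Finset.mem_of_mem_erase hm
      rwa [hMQ, Set.mem_toFinset] at this
    have hGm : ∀ m ∈ MQ.erase m₀, ¬ G.1 ≤ m.1 := by
      intro m hm hGle
      apply (Finset.mem_erase.mp hm).1
      exact Subtype.ext (Submodule.eq_of_le_of_finrank_eq
        ((sup_le hGle (hQm m hm)) : m₀.1 ≤ m.1) (by rw [m₀.2, m.2])).symm
    have hterm : ∀ m ∈ MQ.erase m₀, (Em m).card = Nat.choose L 2 := by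
      intro m hm
      rw [hk m]
      have hLcard : (S ∩ {P : PGPoint F 2 | P.1 ≤ m.1}).toFinset.card = L := by
        rw [← hcard]
        symm
        refine Finset.card_bij (fun l hl => (⟨l.1 ⊓ m.1,
          (lines_finrank (fun h : l = m => hGm m hm (h ▸ hG l hl))).2⟩ : PGPoint F 2))
          ?_ ?_ ?_
        · intro l hl
          simp only [Set.mem_toFinset, Set.mem_inter_iff, Set.mem_setOf_eq]
          exact ⟨⟨l, hl, inf_le_left⟩, inf_le_right⟩
        · intro l1 h1 l2 h2 heq
          by_contra hne
          have hinf12 : finrank F ↥(l1.1 ⊓ l2.1) = 1 := (lines_finrank hne).2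
          have hGeq : G.1 = l1.1 ⊓ l2.1 :=
            pt_eq_pt G.2 hinf12 (le_inf (hG l1 h1) (hG l2 h2))
          have hXle : l1.1 ⊓ m.1 ≤ G.1 := by
            rw [hGeq]
            refine le_inf inf_le_left ?_
            have : l1.1 ⊓ m.1 = l2.1 ⊓ m.1 := congrArg Subtype.val heq
            rw [this]
            exact inf_le_left
          have hGX : G.1 = l1.1 ⊓ m.1 :=
            (pt_eq_pt (lines_finrank (fun h : l1 = m => hGm m hm (h ▸ hG l1 h1))).2
              G.2 hXle).symm
          exact hGm m hm (by rw [hGX]; exact inf_le_right)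
        · intro P hP
          rw [Set.mem_toFinset] at hP
          obtain ⟨⟨l, hl, hPl⟩, hPm⟩ := hP
          refine ⟨l, hl, ?_⟩
          exact (Subtype.ext (pt_eq_pt P.2
            (lines_finrank (fun h : l = m => hGm m hm (h ▸ hG l hl))).2
            (le_inf hPl hPm))).symm
      rw [hLcard]
    have hQP : ∀ P ∈ {P : PGPoint F 2 | P.1 ≤ l0.1}.toFinset.erase G, Q ≠ P := by
      intro P hP h
      have := (Finset.mem_erase.mp hP).2
      rw [Set.mem_toFinset] at this
      exact hQl l0 hl0 (by rw [h]; exact this)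
    have hml0 : ∀ m ∈ MQ.erase m₀, m ≠ l0 := fun m hm h => hQl l0 hl0 (h ▸ hQm m hm)
    have hMQcard : (MQ.erase m₀).card = Fintype.card F := by
      have hbij : (MQ.erase m₀).card
          = ({P : PGPoint F 2 | P.1 ≤ l0.1}.toFinset.erase G).card := by
        refine Finset.card_bij' (fun m hm => (⟨m.1 ⊓ l0.1,
            (lines_finrank (hml0 m hm)).2⟩ : PGPoint F 2))
          (fun P hP => (⟨Q.1 ⊔ P.1, sup_points_finrank (hQP P hP)⟩ : PGLine F 2))
          ?_ ?_ ?_ ?_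
        · intro m hm
          simp only [Finset.mem_erase, Set.mem_toFinset, Set.mem_setOf_eq]
          refine ⟨?_, inf_le_right⟩
          intro h
          have : G.1 = m.1 ⊓ l0.1 := congrArg Subtype.val h.symm
          exact hGm m hm (this ▸ inf_le_left)
        · intro P hP
          have hPG := (Finset.mem_erase.mp hP).1
          have hPl0 : P.1 ≤ l0.1 := by
            have := (Finset.mem_erase.mp hP).2
            rwa [Set.mem_toFinset] at this
          rw [Finset.mem_erase]
          constructor
          · intro h
            have hGle : G.1 ≤ Q.1 ⊔ P.1 := by
              have : G.1 ≤ m₀.1 := (le_sup_left : G.1 ≤ G.1 ⊔ Q.1)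
              rw [← h] at this
              exact this
            have hGP : G ≠ P := fun h' => hPG (h'.symm)
            have hl0eq : G.1 ⊔ P.1 = l0.1 := pair_line hGP (hG l0 hl0) hPl0
            have hle : l0.1 ≤ Q.1 ⊔ P.1 := by
              rw [← hl0eq]
              exact sup_le hGle le_sup_right
            have : l0.1 = Q.1 ⊔ P.1 := Submodule.eq_of_le_of_finrank_eq hle
              (by rw [l0.2, sup_points_finrank (hQP P hP)])
            exact hQl l0 hl0 (by rw [this]; exact le_sup_left)
          · simp only [hMQ, Set.mem_toFinset, Set.mem_setOf_eq]
            exact le_sup_left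
        · intro m hm
          apply Subtype.ext
          have hQpt : Q ≠ (⟨m.1 ⊓ l0.1, (lines_finrank (hml0 m hm)).2⟩ : PGPoint F 2) := by
            intro h
            exact hQl l0 hl0 (by rw [h]; exact inf_le_right)
          exact Submodule.eq_of_le_of_finrank_eq
            (sup_le (hQm m hm) inf_le_left)
            (by rw [sup_points_finrank hQpt, m.2])
        · intro P hP
          apply Subtype.ext
          exact (pt_eq_pt P.2
            (lines_finrank (fun h : (⟨Q.1 ⊔ P.1, sup_points_finrank (hQP P hP)⟩ : PGLine F 2) = l0 =>
              hQl l0 hl0 (by rw [← h]; exact le_sup_left))).2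
            (le_inf le_sup_right ((Set.mem_toFinset.mp (Finset.mem_erase.mp hP).2)))).symm
      rw [hbij, Finset.card_erase_of_mem (by rw [Set.mem_toFinset]; exact hG l0 hl0), hpts l0]
      omega
    have h1 : (S ∩ {P : PGPoint F 2 | P.1 ≤ m₀.1}).toFinset.card = 1 := by
      rw [Set.toFinset_congr hSm₀, Set.toFinset_singleton, Finset.card_singleton]
    unfold pairCount
    rw [Set.ncard_eq_toFinset_card', hE, Finset.card_biUnion hdisjE,
      ← Finset.add_sum_erase MQ _ hm₀MQ, hk m₀, h1,
      Finset.sum_congr rfl hterm, Finset.sum_const, smul_eq_mul, hMQcard]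
    have h0 : Nat.choose 1 2 = 0 := rfl
    rw [h0, Nat.zero_add, Nat.mul_comm]
  refine ⟨hS1, hpair, ?_, ?_, hpair⟩
  · -- Spans S
    obtain ⟨l1, hl1, l2, hl2, h12⟩ := Finset.one_lt_card.mp (by omega : 1 < lines.card)
    have hsub : ∀ l ∈ lines, l.1 ≤ ⨆ P ∈ S, P.1 := by
      intro l hl x hx
      rcases eq_or_ne x 0 with rfl | hx0
      · exact Submodule.zero_mem _
      · have hP : (⟨Submodule.span F {x}, finrank_span_singleton hx0⟩ : PGPoint F 2) ∈ S :=
          ⟨l, hl, (Submodule.span_singleton_le_iff_mem x _).mpr hx⟩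
        have hle := le_iSup₂ (f := fun (P : PGPoint F 2) (_ : P ∈ S) => P.1) _ hP
        exact hle (Submodule.mem_span_singleton_self x)
    have h3 : finrank F ↥(l1.1 ⊔ l2.1) = 3 := (lines_finrank h12).1
    have hle : l1.1 ⊔ l2.1 ≤ ⨆ P ∈ S, P.1 := sup_le (hsub l1 hl1) (hsub l2 hl2)
    have hge : 3 ≤ finrank F ↥(⨆ P ∈ S, P.1) := h3 ▸ Submodule.finrank_mono hle
    have hle3 : finrank F ↥(⨆ P ∈ S, P.1) ≤ 3 := by
      have := Submodule.finrank_le (⨆ P ∈ S, P.1)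
      rwa [hV3] at this
    exact Submodule.eq_top_of_finrank_eq (by rw [hV3]; omega)
  · -- S ≠ univ
    intro hSU
    have htot := ncard_pts_mul (F := F) (⊤ : Submodule F (Fin (2 + 1) → F))
    rw [finrank_top, hV3] at htot
    have huniv : {P : PGPoint F 2 | P.1 ≤ (⊤ : Submodule F (Fin (2 + 1) → F))}
        = Set.univ := by
      ext P; simp
    rw [huniv, ← hSU, hS1] at htot
    obtain ⟨r, hr⟩ := Nat.exists_eq_add_of_le hq2
    rw [hr] at htot hLq
    have hsub1 : 2 + r - 1 = r + 1 := by omega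
    rw [hsub1] at htot
    have hcube : (2 + r) ^ 3 = (r + 1) * ((2 + r) * (2 + r)) + (r * r + 4 * r + 4) := by ring
    rw [hcube] at htot
    have hsub2 : (r + 1) * ((2 + r) * (2 + r)) + (r * r + 4 * r + 4) - 1
        = (r + 1) * ((2 + r) * (2 + r)) + (r * r + 4 * r + 3) := by omega
    rw [hsub2] at htot
    have hmul : L * (2 + r) ≤ (2 + r) * (2 + r) := Nat.mul_le_mul_right _ hLq
    have hexp : (1 + L * (2 + r)) * (r + 1) = (r + 1) + (L * (2 + r)) * (r + 1) := by ring
    rw [hexp] at htot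
    have : (L * (2 + r)) * (r + 1) ≤ ((2 + r) * (2 + r)) * (r + 1) :=
      Nat.mul_le_mul_right _ hmul
    nlinarith [this, htot]
end
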